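/- arXiv:1510.00129 — 10 statements merged into one kernel-verified Lean document; each statement's English description precedes it below -/
import Mathlib

section
/- Let G be a finite group whose order is neither 1 nor a prime, and let k be the number of distinct prime divisors of |G|. Then the clique number of 𝒫(G) equals k and the chromatic number of 𝒫(G) equals k; in particular 𝒫(G) is weakly χ-perfect (its clique number equals its chromatic number). -/
/-!
Colouring a subgroup by the least prime dividing its order is proper, because subgroups of
coprime order share no prime; so `𝒫(G)` is coloured by the prime divisors of `|G|`. Conversely,
the subgroups of order `p`, one for each prime `p ∣ |G|`, form a clique of the same size; they
are proper since `|G|` is not prime.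
-/

open SimpleGraph

/-- The coprime graph of subgroups of a group `G`: vertices are the proper nontrivial
subgroups of `G`, and two distinct vertices are adjacent iff their orders are coprime. -/
def coprimeGraph (G : Type*) [Group G] :
    SimpleGraph {H : Subgroup G // H ≠ ⊥ ∧ H ≠ ⊤} where
  Adj H K := H ≠ K ∧ Nat.Coprime (Nat.card H.1) (Nat.card K.1)
  symm := ⟨fun _ _ h => ⟨h.1.symm, h.2.symm⟩⟩
  loopless := ⟨fun _ h => h.1 rfl⟩

namespace SimpleGraph

variable {V : Type*} {G : SimpleGraph V}

theorem IsClique.cliqueNum_eq_of_colorable {s : Finset V} (hs : G.IsClique s)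
    (hc : G.Colorable s.card) : G.cliqueNum = s.card := by
  obtain ⟨t, ht⟩ := G.exists_isNClique_cliqueNum
  refine le_antisymm (ht.card_eq ▸ ht.isClique.card_le_of_colorable hc) (le_csSup ?_ ⟨s, hs, rfl⟩)
  exact ⟨s.card, fun _ ⟨u, hu⟩ ↦ hu.card_eq ▸ hu.isClique.card_le_of_colorable hc⟩

theorem IsClique.chromaticNumber_eq_of_colorable {s : Finset V} (hs : G.IsClique s)
    (hc : G.Colorable s.card) : G.chromaticNumber = s.card :=
  le_antisymm hc.chromaticNumber_le hs.card_le_chromaticNumber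

end SimpleGraph

theorem Nat.minFac_ne_minFac_of_coprime {a b : ℕ} (ha : a ≠ 1) (hab : a.Coprime b) :
    a.minFac ≠ b.minFac := by
  intro h
  have : a.minFac ∣ Nat.gcd a b := Nat.dvd_gcd a.minFac_dvd (h ▸ b.minFac_dvd)
  rw [hab, Nat.dvd_one] at this
  exact (Nat.minFac_prime ha).one_lt.ne' this

theorem Subgroup.minFac_card_mem_primeFactors {G : Type*} [Group G] [Finite G]
    {H : Subgroup G} (hH : H ≠ ⊥) : (Nat.card H).minFac ∈ (Nat.card G).primeFactors :=
  Nat.mem_primeFactors.mpr ⟨Nat.minFac_prime (mt Subgroup.card_eq_one.mp hH),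
    (Nat.minFac_dvd _).trans H.card_subgroup_dvd_card, Nat.card_pos.ne'⟩

namespace coprimeGraph

variable {G : Type*} [Group G] [Finite G]

noncomputable def minFacColoring : (coprimeGraph G).Coloring (Nat.card G).primeFactors :=
  Coloring.mk (fun H ↦ ⟨(Nat.card H.1).minFac, Subgroup.minFac_card_mem_primeFactors H.2.1⟩)
    fun {H _} hHK heq ↦
      Nat.minFac_ne_minFac_of_coprime (mt Subgroup.card_eq_one.mp H.2.1) hHK.2
        (congrArg Subtype.val heq)

theorem colorable_card_primeFactors :
    (coprimeGraph G).Colorable (Nat.card G).primeFactors.card := by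
  simpa using minFacColoring.colorable

theorem exists_card_eq_prime (hp : ¬ (Nat.card G).Prime) {p : ℕ}
    (hpG : p ∈ (Nat.card G).primeFactors) :
    ∃ H : {H : Subgroup G // H ≠ ⊥ ∧ H ≠ ⊤}, Nat.card H.1 = p := by
  have hpp := Nat.prime_of_mem_primeFactors hpG
  have : Fact p.Prime := ⟨hpp⟩
  obtain ⟨H, hH⟩ := Sylow.exists_subgroup_card_pow_prime p (n := 1)
    (by simpa using Nat.dvd_of_mem_primeFactors hpG)
  rw [pow_one] at hH
  refine ⟨⟨H, fun hbot ↦ ?_, fun htop ↦ ?_⟩, hH⟩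
  · exact hpp.ne_one (by rw [← hH, hbot, Subgroup.card_bot])
  · exact hp (by rwa [← hH, htop, Subgroup.card_top] at hpp)

theorem exists_isClique_card_eq (hp : ¬ (Nat.card G).Prime) :
    ∃ s : Finset {H : Subgroup G // H ≠ ⊥ ∧ H ≠ ⊤},
      (coprimeGraph G).IsClique s ∧ s.card = (Nat.card G).primeFactors.card := by
  classical
  choose f hf using fun p : (Nat.card G).primeFactors ↦ exists_card_eq_prime hp p.2
  have hf_inj : Function.Injective f := fun p q hpq ↦ Subtype.ext (by rw [← hf p, ← hf q, hpq])
  refine ⟨Finset.univ.image f, ?_, by rw [Finset.card_image_of_injective _ hf_inj]; simp⟩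
  rintro _ hH _ hK hHK
  obtain ⟨p, -, rfl⟩ := Finset.mem_image.mp hH
  obtain ⟨q, -, rfl⟩ := Finset.mem_image.mp hK
  refine ⟨hHK, ?_⟩
  rw [hf, hf, Nat.coprime_primes (Nat.prime_of_mem_primeFactors p.2)
    (Nat.prime_of_mem_primeFactors q.2)]
  exact fun h ↦ hHK (congrArg f (Subtype.ext h))

end coprimeGraph

theorem cliqueNum_and_chromaticNumber_coprimeGraph_general {G : Type*} [Group G] [Finite G]
    (hp : ¬ (Nat.card G).Prime) :
    (coprimeGraph G).cliqueNum = (Nat.card G).primeFactors.card ∧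
      (coprimeGraph G).chromaticNumber = ((Nat.card G).primeFactors.card : ℕ∞) := by
  obtain ⟨s, hs, hcard⟩ := coprimeGraph.exists_isClique_card_eq hp
  have hc : (coprimeGraph G).Colorable s.card := hcard ▸ coprimeGraph.colorable_card_primeFactors
  rw [← hcard]
  exact ⟨hs.cliqueNum_eq_of_colorable hc, hs.chromaticNumber_eq_of_colorable hc⟩

theorem cliqueNum_and_chromaticNumber_coprimeGraph {G : Type*} [Group G] [Finite G]
    (h1 : Nat.card G ≠ 1) (hp : ¬ (Nat.card G).Prime) :
    (coprimeGraph G).cliqueNum = (Nat.card G).primeFactors.card ∧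
      (coprimeGraph G).chromaticNumber = ((Nat.card G).primeFactors.card : ℕ∞) :=
  cliqueNum_and_chromaticNumber_coprimeGraph_general hp
end

section
/- Let G be a finite group with |G| > 1. Then 𝒫(G) is K_{2,3}-free (contains no copy of the complete bipartite graph K_{2,3}) if and only if one of the following holds: (i) G is a p-group for some prime p; (ii) |G| = p^α · q for distinct primes p, q and some α ≥ 1, and the Sylow q-subgroup of G is normal (equivalently, G has a unique subgroup of order q); (iii) G is cyclic of order p²q² for distinct primes p, q; (iv) G is cyclic of order pqr for pairwise distinct primes p, q, r. -/
/-!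
Write `𝒩(m)` for the set of nontrivial subgroups of `G` whose order divides `m`. Taking for `a` and
`b` the products of the orders on the two sides, `𝒫(G)` contains `K_{2,3}` iff there are coprime
`a`, `b` with `|𝒩(a)| ≥ 2` and `|𝒩(b)| ≥ 3`.

In cases (i) and (ii), `|𝒩(m)| ≤ 1` for every `m` prime to `p`, and one of `a`, `b` is prime to
`p`. In a cyclic group a subgroup is determined by its order, so `|𝒩(a)| < τ(gcd(a, |G|))`; as `τ`
is multiplicative, a copy of `K_{2,3}` forces `τ(|G|) ≥ 3 · 4`, while `τ(p²q²) = 9`, `τ(pqr) = 8`.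

Conversely, for a prime `s` with `s^v ∥ |G|`, `𝒩(s^v)` consists of the nontrivial `s`-subgroups.
It has at least `v` elements (Sylow), and exactly `v` only if every order `s^k` is taken by a
single subgroup, which makes the Sylow `s`-subgroup cyclic and normal. If distinct primes `u`, `w`
divide both `|G|` and `m`, then `|𝒩(m)| ≥ 3`: otherwise the subgroups of orders `u` and `w` are
unique, hence normal, and generate a cyclic subgroup of order `uw`. So four prime divisors give a
copy of `K_{2,3}` (`a = pq`, `b = rt`), and with three prime divisors each Sylow subgroup is normal
of prime order, whence `G` is cyclic of order `pqr`. With two prime divisors, either one of them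
has a single nontrivial `s`-subgroup (case (ii)), or both have exactly two, which Sylow's
`n_s ≡ 1 (mod s)` allows only for `v = 2`; then both Sylow subgroups are cyclic and normal.
-/

open SimpleGraph

theorem Nat.card_divisors_sq_mul_sq {p q : ℕ} (hp : p.Prime) (hq : q.Prime) (hpq : p ≠ q) :
    (p ^ 2 * q ^ 2).divisors.card = 9 := by
  rw [(((Nat.coprime_primes hp hq).mpr hpq).pow 2 2).card_divisors_mul,
    ← ArithmeticFunction.sigma_zero_apply, ← ArithmeticFunction.sigma_zero_apply,
    ArithmeticFunction.sigma_zero_apply_prime_pow hp,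
    ArithmeticFunction.sigma_zero_apply_prime_pow hq]

theorem Nat.card_divisors_mul_mul {p q r : ℕ} (hp : p.Prime) (hq : q.Prime) (hr : r.Prime)
    (hpq : p ≠ q) (hpr : p ≠ r) (hqr : q ≠ r) : (p * q * r).divisors.card = 8 := by
  have cop {a b : ℕ} (ha : a.Prime) (hb : b.Prime) (hab : a ≠ b) : a.Coprime b :=
    (Nat.coprime_primes ha hb).mpr hab
  rw [((cop hp hr hpr).mul_left (cop hq hr hqr)).card_divisors_mul,
    (cop hp hq hpq).card_divisors_mul,
    hp.divisors, hq.divisors, hr.divisors, Finset.card_pair hp.one_lt.ne,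
    Finset.card_pair hq.one_lt.ne, Finset.card_pair hr.one_lt.ne]

section GroupFacts

variable {G : Type*} [Group G]

theorem IsCyclic.subgroup_eq_of_card_eq [Finite G] [IsCyclic G] {H K : Subgroup G}
    (h : Nat.card H = Nat.card K) : H = K := by
  classical
  have := Fintype.ofFinite G
  -- A subgroup of order `m` fills the at most `m` solutions of `x ^ m = 1`.
  have key (L : Subgroup G) : (L : Set G) = {x | x ^ Nat.card L = 1} := by
    refine Set.eq_of_subset_of_ncard_le (fun x hx => ?_) ?_
    · exact congrArg Subtype.val (pow_card_eq_one' (x := (⟨x, hx⟩ : L)))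
    · rw [Set.ncard_eq_toFinset_card', Set.toFinset_ofPred]
      exact (IsCyclic.card_pow_eq_one_le Nat.card_pos).trans_eq (Nat.card_coe_set_eq _)
  exact SetLike.coe_injective ((key H).trans (h ▸ (key K).symm))

theorem Subgroup.normal_of_card_eq_imp_eq {H : Subgroup G}
    (h : ∀ K : Subgroup G, Nat.card K = Nat.card H → K = H) : H.Normal where
  conj_mem n hn g := by
    rw [← h _ (Subgroup.card_map_of_injective (f := (MulAut.conj g).toMonoidHom)
      (MulAut.conj g).injective)]
    exact ⟨n, hn, rfl⟩

theorem commute_of_normal_zpowers {x y : G} (hx : (Subgroup.zpowers x).Normal)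
    (hy : (Subgroup.zpowers y).Normal) (h : (orderOf x).Coprime (orderOf y)) : Commute x y :=
  Subgroup.commute_of_normal_of_disjoint _ _ hx hy
    (Subgroup.disjoint_of_coprime_natCard (by simpa only [Nat.card_zpowers]))
    x y (Subgroup.mem_zpowers x) (Subgroup.mem_zpowers y)

theorem exists_isPGroup_of_card_primeFactors_le_one [Finite G]
    (h : (Nat.card G).primeFactors.card ≤ 1) :
    ∃ p : ℕ, p.Prime ∧ IsPGroup p G := by
  obtain ⟨p, hp, hsub⟩ : ∃ p : ℕ, p.Prime ∧ (Nat.card G).primeFactors ⊆ {p} := by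
    obtain hempty | ⟨p, hp⟩ := (Nat.card G).primeFactors.eq_empty_or_nonempty
    · exact ⟨2, Nat.prime_two, hempty ▸ Finset.empty_subset _⟩
    · exact ⟨p, Nat.prime_of_mem_primeFactors hp, fun q hq =>
        Finset.mem_singleton.mpr (Finset.card_le_one.mp h q hq p hp)⟩
  exact ⟨p, hp, (isPGroup_iff_primeFactors_card_subset hp.ne_zero).mpr (hp.primeFactors ▸ hsub)⟩

end GroupFacts

section Criterion

variable {G : Type*} [Group G]

def nontrivialSubgroupsDvd (G : Type*) [Group G] (m : ℕ) : Set (Subgroup G) :=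
  {H | 1 < Nat.card H ∧ Nat.card H ∣ m}

theorem ne_of_coprime_card {H K : Subgroup G} (hH : 1 < Nat.card H)
    (h : (Nat.card H).Coprime (Nat.card K)) : H ≠ K := by
  rintro rfl
  exact hH.ne' ((Nat.coprime_self _).mp h)

theorem ne_top_of_coprime_card [Finite G] {H K : Subgroup G} (hK : 1 < Nat.card K)
    (h : (Nat.card H).Coprime (Nat.card K)) : H ≠ ⊤ := by
  rintro rfl
  rw [Subgroup.card_top] at h
  exact hK.ne' (h.symm.eq_one_of_dvd K.card_subgroup_dvd_card)

theorem le_ncard_nontrivialSubgroupsDvd_prod [Finite G] {ι : Type*} [Fintype ι]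
    {v : ι → {H : Subgroup G // H ≠ ⊥ ∧ H ≠ ⊤}} (hv : Function.Injective v) :
    Nat.card ι ≤ (nontrivialSubgroupsDvd G (∏ i, Nat.card (v i).1)).ncard := by
  rw [← Set.ncard_range_of_injective (Subtype.val_injective.comp hv)]
  refine Set.ncard_le_ncard (Set.range_subset_iff.mpr fun i => ?_) (Set.toFinite _)
  exact ⟨(Subgroup.one_lt_card_iff_ne_bot _).mpr (v i).2.1,
    Finset.dvd_prod_of_mem _ (Finset.mem_univ i)⟩

theorem coprime_card_of_mem_nontrivialSubgroupsDvd {a b : ℕ} (hab : a.Coprime b)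
    ⦃H K : Subgroup G⦄ (hH : H ∈ nontrivialSubgroupsDvd G a) (hK : K ∈ nontrivialSubgroupsDvd G b) :
    (Nat.card H).Coprime (Nat.card K) :=
  (hab.coprime_dvd_left hH.2).coprime_dvd_right hK.2

theorem nonempty_embedding_of_card_le_ncard {γ X : Type*} [Finite γ] {s : Set X} [Finite s]
    (h : Nat.card γ ≤ s.ncard) : Nonempty (γ ↪ s) := by
  have := Fintype.ofFinite γ
  have := Fintype.ofFinite s
  rw [← Nat.card_coe_set_eq, Nat.card_eq_fintype_card, Nat.card_eq_fintype_card] at h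
  exact Function.Embedding.nonempty_of_card_le h

theorem exists_injective_hom_completeBipartiteGraph_iff [Finite G] {α β : Type*} [Finite α]
    [Finite β] [Nonempty α] [Nonempty β] :
    (∃ f : completeBipartiteGraph α β →g coprimeGraph G, Function.Injective f) ↔
      ∃ a b : ℕ, a.Coprime b ∧ Nat.card α ≤ (nontrivialSubgroupsDvd G a).ncard ∧
        Nat.card β ≤ (nontrivialSubgroupsDvd G b).ncard := by
  constructor
  · rintro ⟨f, hf⟩
    have := Fintype.ofFinite α
    have := Fintype.ofFinite β
    have hadj (i : α) (j : β) :=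
      (f.map_rel (by simp : (completeBipartiteGraph α β).Adj (.inl i) (.inr j))).2
    exact ⟨_, _, Nat.Coprime.prod_left fun i _ => Nat.Coprime.prod_right fun j _ => hadj i j,
      le_ncard_nontrivialSubgroupsDvd_prod (hf.comp Sum.inl_injective),
      le_ncard_nontrivialSubgroupsDvd_prod (hf.comp Sum.inr_injective)⟩
  · rintro ⟨a, b, hab, hα, hβ⟩
    have cop := coprime_card_of_mem_nontrivialSubgroupsDvd (G := G) hab
    obtain ⟨A⟩ := nonempty_embedding_of_card_le_ncard hα
    obtain ⟨B⟩ := nonempty_embedding_of_card_le_ncard hβ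
    obtain ⟨i₀⟩ := ‹Nonempty α›
    obtain ⟨j₀⟩ := ‹Nonempty β›
    let v : α ⊕ β → {H : Subgroup G // H ≠ ⊥ ∧ H ≠ ⊤} := Sum.elim
      (fun i => ⟨A i, (Subgroup.one_lt_card_iff_ne_bot _).mp (A i).2.1,
        ne_top_of_coprime_card (B j₀).2.1 (cop (A i).2 (B j₀).2)⟩)
      (fun j => ⟨B j, (Subgroup.one_lt_card_iff_ne_bot _).mp (B j).2.1,
        ne_top_of_coprime_card (A i₀).2.1 (cop (A i₀).2 (B j).2).symm⟩)
    have hne (i : α) (j : β) : v (.inl i) ≠ v (.inr j) := fun h =>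
      ne_of_coprime_card (A i).2.1 (cop (A i).2 (B j).2) (congrArg Subtype.val h)
    refine ⟨⟨v, ?_⟩, ?_⟩
    · rintro (i | j) (i' | j') h <;> simp [completeBipartiteGraph] at h
      · exact ⟨hne i j', cop (A i).2 (B j').2⟩
      · exact ⟨(hne i' j).symm, (cop (A i').2 (B j).2).symm⟩
    · rintro (i | j) (i' | j') h
      · exact congrArg Sum.inl (A.injective (Subtype.ext (congrArg Subtype.val h :)))
      · exact absurd h (hne i j')
      · exact absurd h.symm (hne i' j)
      · exact congrArg Sum.inr (B.injective (Subtype.ext (congrArg Subtype.val h :)))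

def HasCoprimeK23 (G : Type*) [Group G] : Prop :=
  ∃ a b : ℕ, a.Coprime b ∧ 2 ≤ (nontrivialSubgroupsDvd G a).ncard ∧
    3 ≤ (nontrivialSubgroupsDvd G b).ncard

theorem exists_injective_hom_K23_iff [Finite G] :
    (∃ f : completeBipartiteGraph (Fin 2) (Fin 3) →g coprimeGraph G, Function.Injective f) ↔
      HasCoprimeK23 G := by
  simpa [HasCoprimeK23] using
    exists_injective_hom_completeBipartiteGraph_iff (G := G) (α := Fin 2) (β := Fin 3)

theorem not_hasCoprimeK23_of_ncard_le_one {p : ℕ} (hp : p.Prime)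
    (h : ∀ c, ¬ p ∣ c → (nontrivialSubgroupsDvd G c).ncard ≤ 1) : ¬ HasCoprimeK23 G := by
  rintro ⟨a, b, hab, ha, hb⟩
  by_cases hpa : p ∣ a
  · have hpb : ¬ p ∣ b := fun hpb => hp.one_lt.ne' ((hab.coprime_dvd_left hpa).eq_one_of_dvd hpb)
    exact absurd (h b hpb) (by omega)
  · exact absurd (h a hpa) (by omega)

end Criterion

section Freeness

variable {G : Type*} [Group G]

theorem IsPGroup.not_hasCoprimeK23 {p : ℕ} (hp : p.Prime) (hG : IsPGroup p G) :
    ¬ HasCoprimeK23 G := by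
  have := Fact.mk hp
  refine not_hasCoprimeK23_of_ncard_le_one hp fun c hc => ?_
  suffices nontrivialSubgroupsDvd G c = ∅ by simp [this]
  refine Set.eq_empty_of_forall_notMem fun H hH => ?_
  obtain h1 | hpH := (hG.to_subgroup H).card_eq_or_dvd
  · exact hH.1.ne' h1
  · exact hc (hpH.trans hH.2)

variable [Finite G]

theorem not_hasCoprimeK23_of_existsUnique_card_eq {p q α : ℕ} (hp : p.Prime) (hq : q.Prime)
    (hcard : Nat.card G = p ^ α * q) (hQ : ∃! Q : Subgroup G, Nat.card Q = q) :
    ¬ HasCoprimeK23 G := by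
  obtain ⟨Q, -, hQ⟩ := hQ
  refine not_hasCoprimeK23_of_ncard_le_one hp fun c hc => ?_
  refine (Set.ncard_le_ncard (t := {Q}) fun H hH => hQ H ?_).trans (Set.ncard_singleton Q).le
  have hHp : (Nat.card H).Coprime (p ^ α) :=
    ((hp.coprime_iff_not_dvd.mpr fun hpH => hc (hpH.trans hH.2)).pow_left α).symm
  have hHq : Nat.card H ∣ q :=
    hHp.dvd_of_dvd_mul_left (hcard ▸ H.card_subgroup_dvd_card)
  exact ((Nat.dvd_prime hq).mp hHq).resolve_left hH.1.ne'

theorem IsCyclic.ncard_nontrivialSubgroupsDvd_lt [IsCyclic G] (c : ℕ) :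
    (nontrivialSubgroupsDvd G c).ncard < (c.gcd (Nat.card G)).divisors.card := by
  have hd : c.gcd (Nat.card G) ≠ 0 := (Nat.gcd_pos_of_pos_right _ Nat.card_pos).ne'
  have h1 : 1 ∈ (c.gcd (Nat.card G)).divisors := Nat.one_mem_divisors.mpr hd
  calc (nontrivialSubgroupsDvd G c).ncard
      ≤ (((c.gcd (Nat.card G)).divisors.erase 1 : Finset ℕ) : Set ℕ).ncard := by
        refine Set.ncard_le_ncard_of_injOn (fun H => Nat.card H) (fun H hH => ?_)
          (fun H _ K _ h => IsCyclic.subgroup_eq_of_card_eq h)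
        exact Finset.mem_erase.mpr ⟨hH.1.ne',
          Nat.mem_divisors.mpr ⟨Nat.dvd_gcd hH.2 H.card_subgroup_dvd_card, hd⟩⟩
    _ < (c.gcd (Nat.card G)).divisors.card := by
        rw [Set.ncard_coe_finset, Finset.card_erase_of_mem h1]
        exact Nat.sub_lt (Finset.card_pos.mpr ⟨1, h1⟩) one_pos

theorem IsCyclic.not_hasCoprimeK23 [IsCyclic G] (h : (Nat.card G).divisors.card < 12) :
    ¬ HasCoprimeK23 G := by
  rintro ⟨a, b, hab, ha, hb⟩
  set n := Nat.card G
  have hcop : (a.gcd n).Coprime (b.gcd n) :=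
    (hab.coprime_dvd_left (Nat.gcd_dvd_left _ _)).coprime_dvd_right (Nat.gcd_dvd_left _ _)
  have hdvd : a.gcd n * b.gcd n ∣ n :=
    hcop.mul_dvd_of_dvd_of_dvd (Nat.gcd_dvd_right _ _) (Nat.gcd_dvd_right _ _)
  have hτ : (a.gcd n).divisors.card * (b.gcd n).divisors.card ≤ n.divisors.card := by
    rw [← hcop.card_divisors_mul]
    exact Finset.card_le_card (Nat.divisors_subset_of_dvd Nat.card_pos.ne' hdvd)
  have := IsCyclic.ncard_nontrivialSubgroupsDvd_lt (G := G) a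
  have := IsCyclic.ncard_nontrivialSubgroupsDvd_lt (G := G) b
  nlinarith

end Freeness

section PrimarySubgroups

variable {G : Type*} [Group G] {s : ℕ}

abbrev nontrivialPSubgroups (G : Type*) [Group G] (s : ℕ) : Set (Subgroup G) :=
  nontrivialSubgroupsDvd G (s ^ (Nat.card G).factorization s)

theorem exists_card_eq_pow_of_mem_nontrivialPSubgroups (hs : s.Prime) {H : Subgroup G}
    (hH : H ∈ nontrivialPSubgroups G s) :
    ∃ k, 1 ≤ k ∧ k ≤ (Nat.card G).factorization s ∧ Nat.card H = s ^ k := by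
  obtain ⟨k, hk, hHk⟩ := (Nat.dvd_prime_pow hs).mp hH.2
  refine ⟨k, Nat.one_le_iff_ne_zero.mpr ?_, hk, hHk⟩
  rintro rfl
  exact hH.1.ne' hHk

variable [Finite G]

theorem mem_nontrivialPSubgroups_of_card_eq (hs : s.Prime) {k : ℕ} (hk : k ≠ 0) {H : Subgroup G}
    (hH : Nat.card H = s ^ k) : H ∈ nontrivialPSubgroups G s := by
  refine ⟨hH ▸ Nat.one_lt_pow hk hs.one_lt, hH ▸ pow_dvd_pow s ?_⟩
  exact (hs.pow_dvd_iff_le_factorization Nat.card_pos.ne').mp (hH ▸ H.card_subgroup_dvd_card)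

theorem factorization_le_ncard_nontrivialPSubgroups (hs : s.Prime) :
    (Nat.card G).factorization s ≤ (nontrivialPSubgroups G s).ncard := by
  have := Fact.mk hs
  have (i : Fin ((Nat.card G).factorization s)) : ∃ H : Subgroup G, Nat.card H = s ^ (i.1 + 1) :=
    Sylow.exists_subgroup_card_pow_prime s
      ((hs.pow_dvd_iff_le_factorization Nat.card_pos.ne').mpr i.2)
  choose H hH using this
  have hinj : Function.Injective H := fun i j hij => by
    have hcard := congrArg (fun K : Subgroup G => Nat.card K) hij
    simp only [hH] at hcard
    exact Fin.ext (Nat.succ_injective (Nat.pow_right_injective hs.two_le hcard))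
  calc (Nat.card G).factorization s = (Set.range H).ncard := by
        rw [Set.ncard_range_of_injective hinj, Nat.card_fin]
    _ ≤ _ := Set.ncard_le_ncard (Set.range_subset_iff.mpr fun i =>
        mem_nontrivialPSubgroups_of_card_eq hs i.1.succ_ne_zero (hH i))

-- The order map onto `{s, s², …, s^v}` is surjective (Sylow), hence injective when counts agree.
theorem injOn_card_of_ncard_le_factorization (hs : s.Prime)
    (h : (nontrivialPSubgroups G s).ncard ≤ (Nat.card G).factorization s) :
    Set.InjOn (fun H : Subgroup G => Nat.card H) (nontrivialPSubgroups G s) := by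
  have := Fact.mk hs
  set v := (Nat.card G).factorization s
  let t : Set ℕ := (s ^ ·) '' Set.Icc 1 v
  have ht : t.ncard = v := by
    rw [Set.ncard_image_of_injective _ (Nat.pow_right_injective hs.two_le),
      Set.ncard_eq_toFinset_card', Set.toFinset_Icc, Nat.card_Icc, Nat.add_sub_cancel]
  intro H hH K hK hHK
  refine Set.inj_on_of_surj_on_of_ncard_le (fun (L : Subgroup G) _ => Nat.card L)
    (fun L hL => ?_) (fun b hb => ?_) (h.trans ht.ge) hH hK hHK
  · obtain ⟨k, hk1, hkv, hLk⟩ := exists_card_eq_pow_of_mem_nontrivialPSubgroups hs hL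
    exact ⟨k, ⟨hk1, hkv⟩, hLk.symm⟩
  · obtain ⟨k, ⟨hk1, hkv⟩, rfl⟩ := hb
    obtain ⟨L, hL⟩ := Sylow.exists_subgroup_card_pow_prime s
      ((hs.pow_dvd_iff_le_factorization Nat.card_pos.ne').mpr hkv)
    exact ⟨L, mem_nontrivialPSubgroups_of_card_eq hs (by omega) hL, hL⟩

theorem exists_orderOf_eq_of_injOn_card (hs : s.Prime)
    (hinj : Set.InjOn (fun H : Subgroup G => Nat.card H) (nontrivialPSubgroups G s)) :
    ∃ g : G, orderOf g = s ^ (Nat.card G).factorization s := by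
  have := Fact.mk hs
  set v := (Nat.card G).factorization s
  have hdvd {k : ℕ} (hk : k ≤ v) : s ^ k ∣ Nat.card G :=
    (hs.pow_dvd_iff_le_factorization Nat.card_pos.ne').mpr hk
  rcases Nat.eq_zero_or_pos v with hv | hv
  · exact ⟨1, by rw [orderOf_one, hv, pow_zero]⟩
  obtain ⟨P, hP⟩ := Sylow.exists_subgroup_card_pow_prime s (hdvd le_rfl)
  obtain ⟨M, hM⟩ := Sylow.exists_subgroup_card_pow_prime s (hdvd (Nat.sub_le v 1))
  have hMuniq (K : Subgroup G) (hK : Nat.card K = s ^ (v - 1)) : K = M := by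
    rcases Nat.eq_zero_or_pos (v - 1) with h0 | h0
    · rw [h0, pow_zero] at hK hM
      rw [K.eq_bot_of_card_eq hK, M.eq_bot_of_card_eq hM]
    · exact hinj (mem_nontrivialPSubgroups_of_card_eq hs h0.ne' hK)
        (mem_nontrivialPSubgroups_of_card_eq hs h0.ne' hM) (hK.trans hM.symm)
  -- An element of `P` outside `M` generates all of `P`: a smaller cyclic subgroup would lie in
  -- a subgroup of order `s ^ (v - 1)`, that is, in `M`.
  obtain ⟨g, hgP, hgM⟩ := SetLike.not_le_iff_exists.mp fun hle : P ≤ M => by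
    have hcard := Subgroup.card_le_of_le hle
    rw [hP, hM] at hcard
    exact hcard.not_gt (Nat.pow_lt_pow_right hs.one_lt (by omega))
  obtain ⟨j, hjv, hj⟩ := (Nat.dvd_prime_pow hs).mp (hP ▸ P.orderOf_dvd_natCard hgP)
  refine ⟨g, hj.trans (congrArg _ (le_antisymm hjv (not_lt.mp fun hjv' => hgM ?_)))⟩
  obtain ⟨K, hK, hgK⟩ := Sylow.exists_subgroup_card_pow_prime_le s (hdvd (Nat.sub_le v 1))
    (Subgroup.zpowers g) (by rw [Nat.card_zpowers, hj]) (by omega : j ≤ v - 1)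
  exact hMuniq K hK ▸ hgK (Subgroup.mem_zpowers g)

theorem exists_normal_zpowers_orderOf_eq (hs : s.Prime) (hsn : s ∣ Nat.card G)
    (h : (nontrivialPSubgroups G s).ncard ≤ (Nat.card G).factorization s) :
    ∃ g : G, orderOf g = s ^ (Nat.card G).factorization s ∧ (Subgroup.zpowers g).Normal := by
  have hinj := injOn_card_of_ncard_le_factorization hs h
  obtain ⟨g, hg⟩ := exists_orderOf_eq_of_injOn_card hs hinj
  have hv := (hs.factorization_pos_of_dvd Nat.card_pos.ne' hsn).ne'
  have hgcard : Nat.card (Subgroup.zpowers g) = s ^ (Nat.card G).factorization s := by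
    rw [Nat.card_zpowers, hg]
  exact ⟨g, hg, Subgroup.normal_of_card_eq_imp_eq fun K hK =>
    hinj (mem_nontrivialPSubgroups_of_card_eq hs hv (hK.trans hgcard))
      (mem_nontrivialPSubgroups_of_card_eq hs hv hgcard) hK⟩

theorem ncard_nontrivialPSubgroups_eq_card_sylow (hs : s.Prime)
    (hv : (Nat.card G).factorization s = 1) :
    (nontrivialPSubgroups G s).ncard = Nat.card (Sylow s G) := by
  have := Fact.mk hs
  suffices nontrivialPSubgroups G s = Set.range ((↑) : Sylow s G → Subgroup G) by
    rw [this, Set.ncard_range_of_injective fun P Q h => Sylow.ext h]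
  ext H
  constructor
  · intro hH
    obtain ⟨k, hk1, hkv, hHk⟩ := exists_card_eq_pow_of_mem_nontrivialPSubgroups hs hH
    have hk : k = (Nat.card G).factorization s := by omega
    exact ⟨Sylow.ofCard H (hk ▸ hHk), Sylow.coe_ofCard _ _⟩
  · rintro ⟨P, rfl⟩
    exact mem_nontrivialPSubgroups_of_card_eq hs (by omega) P.card_eq_multiplicity

theorem factorization_eq_two_of_ncard_eq_two (hs : s.Prime) (hsn : s ∣ Nat.card G)
    (h : (nontrivialPSubgroups G s).ncard = 2) : (Nat.card G).factorization s = 2 := by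
  have := Fact.mk hs
  have hle := factorization_le_ncard_nontrivialPSubgroups (G := G) hs
  have hpos := hs.factorization_pos_of_dvd Nat.card_pos.ne' hsn
  suffices (Nat.card G).factorization s ≠ 1 by omega
  intro hv
  have hmod := card_sylow_modEq_one s G
  rw [← ncard_nontrivialPSubgroups_eq_card_sylow hs hv, h] at hmod
  exact hs.one_lt.ne' (Nat.dvd_one.mp ((Nat.modEq_iff_dvd' one_le_two).mp hmod.symm))

theorem existsUnique_card_eq_of_ncard_le_one (hs : s.Prime) (hsn : s ∣ Nat.card G)
    (h : (nontrivialPSubgroups G s).ncard ≤ 1) :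
    (Nat.card G).factorization s = 1 ∧ ∃! H : Subgroup G, Nat.card H = s := by
  have := Fact.mk hs
  have hv : (Nat.card G).factorization s = 1 := le_antisymm
    ((factorization_le_ncard_nontrivialPSubgroups hs).trans h)
    (hs.factorization_pos_of_dvd Nat.card_pos.ne' hsn)
  have mem {K : Subgroup G} (hK : Nat.card K = s) : K ∈ nontrivialPSubgroups G s :=
    mem_nontrivialPSubgroups_of_card_eq hs one_ne_zero (hK.trans (pow_one s).symm)
  obtain ⟨H, hH⟩ := Sylow.exists_subgroup_card_pow_prime s ((pow_one s).symm ▸ hsn)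
  rw [pow_one] at hH
  exact ⟨hv, H, hH, fun K hK => (Set.ncard_le_one (Set.toFinite _)).mp h K (mem hK) H (mem hH)⟩

theorem exists_normal_zpowers_orderOf_eq_prime (hs : s.Prime) (hsn : s ∣ Nat.card G)
    (h : (nontrivialPSubgroups G s).ncard ≤ 1) :
    ∃ g : G, orderOf g = s ∧ (Subgroup.zpowers g).Normal := by
  have hv := (existsUnique_card_eq_of_ncard_le_one hs hsn h).1
  obtain ⟨g, hg, hgn⟩ := exists_normal_zpowers_orderOf_eq hs hsn (h.trans hv.ge)
  exact ⟨g, by rw [hg, hv, pow_one], hgn⟩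

end PrimarySubgroups

section Forward

variable {G : Type*} [Group G] [Finite G]

theorem three_le_ncard_nontrivialSubgroupsDvd {u v m : ℕ} (hu : u.Prime) (hv : v.Prime)
    (huv : u ≠ v) (hun : u ∣ Nat.card G) (hvn : v ∣ Nat.card G) (hum : u ∣ m) (hvm : v ∣ m) :
    3 ≤ (nontrivialSubgroupsDvd G m).ncard := by
  have := Fact.mk hu
  have := Fact.mk hv
  by_contra hlt
  have distinct {A B C : Subgroup G} (hA : A ∈ nontrivialSubgroupsDvd G m)
      (hB : B ∈ nontrivialSubgroupsDvd G m) (hC : C ∈ nontrivialSubgroupsDvd G m)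
      (hAB : A ≠ B) (hAC : A ≠ C) (hBC : B ≠ C) : False :=
    hlt ((Set.two_lt_ncard_iff (Set.toFinite _)).mpr ⟨A, B, C, hA, hB, hC, hAB, hAC, hBC⟩)
  have ne_of_card {A B : Subgroup G} (h : Nat.card A ≠ Nat.card B) : A ≠ B :=
    fun hAB => h (hAB ▸ rfl)
  -- With at most two members, a member of a given order is the only subgroup of that order.
  have normal_of {A B : Subgroup G} (hA : A ∈ nontrivialSubgroupsDvd G m)
      (hB : B ∈ nontrivialSubgroupsDvd G m) (hAB : Nat.card A ≠ Nat.card B) : A.Normal :=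
    Subgroup.normal_of_card_eq_imp_eq fun K hK => by_contra fun hKA =>
      distinct ⟨hK ▸ hA.1, hK ▸ hA.2⟩ hA hB hKA (ne_of_card (hK ▸ hAB)) (ne_of_card hAB)
  obtain ⟨x, hx⟩ := exists_prime_orderOf_dvd_card' u hun
  obtain ⟨y, hy⟩ := exists_prime_orderOf_dvd_card' v hvn
  have hcop : (orderOf x).Coprime (orderOf y) := hx ▸ hy ▸ (Nat.coprime_primes hu hv).mpr huv
  have hX : Nat.card (Subgroup.zpowers x) = u := by rw [Nat.card_zpowers, hx]
  have hY : Nat.card (Subgroup.zpowers y) = v := by rw [Nat.card_zpowers, hy]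
  have hXm : Subgroup.zpowers x ∈ nontrivialSubgroupsDvd G m := ⟨hX ▸ hu.one_lt, hX ▸ hum⟩
  have hYm : Subgroup.zpowers y ∈ nontrivialSubgroupsDvd G m := ⟨hY ▸ hv.one_lt, hY ▸ hvm⟩
  have hXY : Nat.card (Subgroup.zpowers (x * y)) = u * v := by
    rw [Nat.card_zpowers, ← hx, ← hy]
    exact (commute_of_normal_zpowers (normal_of hXm hYm (hX ▸ hY ▸ huv))
      (normal_of hYm hXm (hX ▸ hY ▸ huv.symm)) hcop).orderOf_mul_eq_mul_orderOf_of_coprime hcop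
  have hXYm : Subgroup.zpowers (x * y) ∈ nontrivialSubgroupsDvd G m :=
    ⟨hXY ▸ one_lt_mul_of_lt_of_le hu.one_lt hv.one_lt.le,
      hXY ▸ ((Nat.coprime_primes hu hv).mpr huv).mul_dvd_of_dvd_of_dvd hum hvm⟩
  exact distinct hXm hYm hXYm (ne_of_card (hX ▸ hY ▸ huv))
    (ne_of_card (hX ▸ hXY ▸ (lt_mul_of_one_lt_right hu.pos hv.one_lt).ne))
    (ne_of_card (hY ▸ hXY ▸ (lt_mul_of_one_lt_left hv.pos hu.one_lt).ne))

theorem ncard_nontrivialPSubgroups_le_one (hK : ¬ HasCoprimeK23 G) {s u v : ℕ} (hs : s.Prime)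
    (hu : u.Prime) (hv : v.Prime) (huv : u ≠ v) (hus : u ≠ s) (hvs : v ≠ s)
    (hun : u ∣ Nat.card G) (hvn : v ∣ Nat.card G) : (nontrivialPSubgroups G s).ncard ≤ 1 := by
  have hn : Nat.card G ≠ 0 := Nat.card_pos.ne'
  have hcompl {t : ℕ} (ht : t.Prime) (hts : t ≠ s) (htn : t ∣ Nat.card G) :
      t ∣ Nat.card G / s ^ (Nat.card G).factorization s :=
    Nat.dvd_ordCompl_of_dvd_not_dvd htn fun h => hts ((Nat.prime_dvd_prime_iff_eq hs ht).mp h).symm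
  by_contra! h
  exact hK ⟨_, _, (Nat.coprime_ordCompl hs hn).pow_left _, h,
    three_le_ncard_nontrivialSubgroupsDvd hu hv huv hun hvn (hcompl hu hus hun)
      (hcompl hv hvs hvn)⟩

theorem hasCoprimeK23_of_four_primes {p q r t : ℕ} (hp : p.Prime) (hq : q.Prime) (hr : r.Prime)
    (ht : t.Prime) (hpq : p ≠ q) (hpr : p ≠ r) (hpt : p ≠ t) (hqr : q ≠ r) (hqt : q ≠ t)
    (hrt : r ≠ t) (hpn : p ∣ Nat.card G) (hqn : q ∣ Nat.card G) (hrn : r ∣ Nat.card G)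
    (htn : t ∣ Nat.card G) : HasCoprimeK23 G := by
  have := Fact.mk hp
  have := Fact.mk hq
  obtain ⟨P, hP⟩ := Sylow.exists_subgroup_card_pow_prime p ((pow_one p).symm ▸ hpn)
  obtain ⟨Q, hQ⟩ := Sylow.exists_subgroup_card_pow_prime q ((pow_one q).symm ▸ hqn)
  rw [pow_one] at hP hQ
  have cop {a b : ℕ} (ha : a.Prime) (hb : b.Prime) (hab : a ≠ b) : a.Coprime b :=
    (Nat.coprime_primes ha hb).mpr hab
  refine ⟨p * q, r * t, ((cop hp hr hpr).mul_right (cop hp ht hpt)).mul_left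
    ((cop hq hr hqr).mul_right (cop hq ht hqt)), ?_,
    three_le_ncard_nontrivialSubgroupsDvd hr ht hrt hrn htn (dvd_mul_right r t) (dvd_mul_left t r)⟩
  refine (Set.one_lt_ncard_iff (Set.toFinite _)).mpr ⟨P, Q, ⟨?_, ?_⟩, ⟨?_, ?_⟩, fun h => hpq ?_⟩
  · exact hP ▸ hp.one_lt
  · exact hP ▸ dvd_mul_right p q
  · exact hQ ▸ hq.one_lt
  · exact hQ ▸ dvd_mul_left q p
  · rw [← hP, ← hQ, h]

theorem two_primes_cases (hK : ¬ HasCoprimeK23 G) {p q : ℕ} (hpq : p ≠ q)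
    (hpf : (Nat.card G).primeFactors = {p, q}) :
    (∃ p q α : ℕ, p.Prime ∧ q.Prime ∧ p ≠ q ∧ 1 ≤ α ∧ Nat.card G = p ^ α * q ∧
        ∃! H : Subgroup G, Nat.card H = q) ∨
      ∃ p q : ℕ, p.Prime ∧ q.Prime ∧ p ≠ q ∧ IsCyclic G ∧ Nat.card G = p ^ 2 * q ^ 2 := by
  have hn : Nat.card G ≠ 0 := Nat.card_pos.ne'
  obtain ⟨hp, hpn, -⟩ := Nat.mem_primeFactors.mp (hpf ▸ Finset.mem_insert_self p {q})
  obtain ⟨hq, hqn, -⟩ := Nat.mem_primeFactors.mp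
    (hpf ▸ Finset.mem_insert_of_mem (Finset.mem_singleton_self q))
  have hcard : Nat.card G =
      p ^ (Nat.card G).factorization p * q ^ (Nat.card G).factorization q :=
    (Nat.prod_primeFactors_pow_factorization hn).trans (by rw [hpf, Finset.prod_pair hpq])
  have hcop : (p ^ (Nat.card G).factorization p).Coprime (q ^ (Nat.card G).factorization q) :=
    ((Nat.coprime_primes hp hq).mpr hpq).pow _ _
  have hPQ : ¬ (2 ≤ (nontrivialPSubgroups G p).ncard ∧ 3 ≤ (nontrivialPSubgroups G q).ncard) :=
    fun h => hK ⟨_, _, hcop, h⟩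
  have hQP : ¬ (2 ≤ (nontrivialPSubgroups G q).ncard ∧ 3 ≤ (nontrivialPSubgroups G p).ncard) :=
    fun h => hK ⟨_, _, hcop.symm, h⟩
  by_cases hQ : (nontrivialPSubgroups G q).ncard ≤ 1
  · obtain ⟨hβ, hQu⟩ := existsUnique_card_eq_of_ncard_le_one hq hqn hQ
    exact .inl ⟨p, q, _, hp, hq, hpq, hp.factorization_pos_of_dvd hn hpn,
      hcard.trans (by rw [hβ, pow_one]), hQu⟩
  by_cases hP : (nontrivialPSubgroups G p).ncard ≤ 1
  · obtain ⟨hα, hPu⟩ := existsUnique_card_eq_of_ncard_le_one hp hpn hP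
    exact .inl ⟨q, p, _, hq, hp, hpq.symm, hq.factorization_pos_of_dvd hn hqn,
      hcard.trans (by rw [hα, pow_one, mul_comm]), hPu⟩
  have hα := factorization_eq_two_of_ncard_eq_two hp hpn (by omega)
  have hβ := factorization_eq_two_of_ncard_eq_two hq hqn (by omega)
  obtain ⟨x, hx, hxn⟩ := exists_normal_zpowers_orderOf_eq hp hpn (by omega)
  obtain ⟨y, hy, hyn⟩ := exists_normal_zpowers_orderOf_eq hq hqn (by omega)
  have hxy := commute_of_normal_zpowers hxn hyn (hx ▸ hy ▸ hcop)
  refine .inr ⟨p, q, hp, hq, hpq, isCyclic_of_orderOf_eq_card (x * y) ?_,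
    hcard.trans (by rw [hα, hβ])⟩
  rw [hxy.orderOf_mul_eq_mul_orderOf_of_coprime (hx ▸ hy ▸ hcop), hx, hy, ← hcard]

theorem primeFactors_eq_of_three_primes (hK : ¬ HasCoprimeK23 G) {p q r : ℕ}
    (hpG : p ∈ (Nat.card G).primeFactors) (hqG : q ∈ (Nat.card G).primeFactors)
    (hrG : r ∈ (Nat.card G).primeFactors) (hpq : p ≠ q) (hpr : p ≠ r) (hqr : q ≠ r) :
    (Nat.card G).primeFactors = {p, q, r} := by
  refine Finset.Subset.antisymm (fun t htG => ?_) (by simp [Finset.insert_subset_iff, *])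
  obtain ⟨hp, hpn, -⟩ := Nat.mem_primeFactors.mp hpG
  obtain ⟨hq, hqn, -⟩ := Nat.mem_primeFactors.mp hqG
  obtain ⟨hr, hrn, -⟩ := Nat.mem_primeFactors.mp hrG
  obtain ⟨ht, htn, -⟩ := Nat.mem_primeFactors.mp htG
  by_contra htpqr
  simp only [Finset.mem_insert, Finset.mem_singleton, not_or] at htpqr
  exact hK (hasCoprimeK23_of_four_primes hp hq hr ht hpq hpr (Ne.symm htpqr.1) hqr
    (Ne.symm htpqr.2.1) (Ne.symm htpqr.2.2) hpn hqn hrn htn)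

theorem isCyclic_and_card_eq_of_three_primes (hK : ¬ HasCoprimeK23 G) {p q r : ℕ}
    (hpG : p ∈ (Nat.card G).primeFactors) (hqG : q ∈ (Nat.card G).primeFactors)
    (hrG : r ∈ (Nat.card G).primeFactors) (hpq : p ≠ q) (hpr : p ≠ r) (hqr : q ≠ r) :
    IsCyclic G ∧ Nat.card G = p * q * r := by
  obtain ⟨hp, hpn, hn⟩ := Nat.mem_primeFactors.mp hpG
  obtain ⟨hq, hqn, -⟩ := Nat.mem_primeFactors.mp hqG
  obtain ⟨hr, hrn, -⟩ := Nat.mem_primeFactors.mp hrG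
  have hP := ncard_nontrivialPSubgroups_le_one hK hp hq hr hqr hpq.symm hpr.symm hqn hrn
  have hQ := ncard_nontrivialPSubgroups_le_one hK hq hp hr hpr hpq hqr.symm hpn hrn
  have hR := ncard_nontrivialPSubgroups_le_one hK hr hp hq hpq hpr hqr hpn hqn
  have hcard : Nat.card G = p * q * r := by
    rw [Nat.prod_primeFactors_pow_factorization hn,
      primeFactors_eq_of_three_primes hK hpG hqG hrG hpq hpr hqr,
      Finset.prod_insert (by simp [hpq, hpr]), Finset.prod_pair hqr,
      (existsUnique_card_eq_of_ncard_le_one hp hpn hP).1,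
      (existsUnique_card_eq_of_ncard_le_one hq hqn hQ).1,
      (existsUnique_card_eq_of_ncard_le_one hr hrn hR).1, pow_one, pow_one, pow_one, mul_assoc]
  obtain ⟨x, hx, hxn⟩ := exists_normal_zpowers_orderOf_eq_prime hp hpn hP
  obtain ⟨y, hy, hyn⟩ := exists_normal_zpowers_orderOf_eq_prime hq hqn hQ
  obtain ⟨z, hz, hzn⟩ := exists_normal_zpowers_orderOf_eq_prime hr hrn hR
  have cop {a b : ℕ} (ha : a.Prime) (hb : b.Prime) (hab : a ≠ b) : a.Coprime b :=
    (Nat.coprime_primes ha hb).mpr hab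
  have hxy : orderOf (x * y) = p * q := by
    rw [(commute_of_normal_zpowers hxn hyn (hx ▸ hy ▸ cop hp hq hpq)
      ).orderOf_mul_eq_mul_orderOf_of_coprime (hx ▸ hy ▸ cop hp hq hpq), hx, hy]
  have hxyz : Commute (x * y) z :=
    (commute_of_normal_zpowers hxn hzn (hx ▸ hz ▸ cop hp hr hpr)).mul_left
      (commute_of_normal_zpowers hyn hzn (hy ▸ hz ▸ cop hq hr hqr))
  refine ⟨isCyclic_of_orderOf_eq_card (x * y * z) ?_, hcard⟩
  rw [hxyz.orderOf_mul_eq_mul_orderOf_of_coprime (hxy ▸ hz ▸ (cop hp hr hpr).mul_left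
    (cop hq hr hqr)), hxy, hz, hcard]

end Forward

theorem coprimeGraph_K23_free_iff_general {G : Type*} [Group G] [Finite G] :
    (¬ ∃ f : completeBipartiteGraph (Fin 2) (Fin 3) →g coprimeGraph G,
        Function.Injective f) ↔
      ((∃ p : ℕ, p.Prime ∧ IsPGroup p G) ∨
       (∃ p q α : ℕ, p.Prime ∧ q.Prime ∧ p ≠ q ∧ 1 ≤ α ∧ Nat.card G = p ^ α * q ∧
          ∃! H : Subgroup G, Nat.card H = q) ∨
       (∃ p q : ℕ, p.Prime ∧ q.Prime ∧ p ≠ q ∧ IsCyclic G ∧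
          Nat.card G = p ^ 2 * q ^ 2) ∨
       (∃ p q r : ℕ, p.Prime ∧ q.Prime ∧ r.Prime ∧ p ≠ q ∧ p ≠ r ∧ q ≠ r ∧
          IsCyclic G ∧ Nat.card G = p * q * r)) := by
  rw [exists_injective_hom_K23_iff]
  constructor
  · intro hK
    obtain h | h | h : (Nat.card G).primeFactors.card ≤ 1 ∨ (Nat.card G).primeFactors.card = 2 ∨
        2 < (Nat.card G).primeFactors.card := by omega
    · exact .inl (exists_isPGroup_of_card_primeFactors_le_one h)
    · obtain ⟨p, q, hpq, hpf⟩ := Finset.card_eq_two.mp h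
      exact .inr ((two_primes_cases hK hpq hpf).imp_right .inl)
    · obtain ⟨p, q, r, hpG, hqG, hrG, hpq, hpr, hqr⟩ := Finset.two_lt_card_iff.mp h
      exact .inr (.inr (.inr ⟨p, q, r, Nat.prime_of_mem_primeFactors hpG,
        Nat.prime_of_mem_primeFactors hqG, Nat.prime_of_mem_primeFactors hrG, hpq, hpr, hqr,
        isCyclic_and_card_eq_of_three_primes hK hpG hqG hrG hpq hpr hqr⟩))
  · rintro (⟨p, hp, hG⟩ | ⟨p, q, α, hp, hq, -, -, hcard, hQ⟩ | ⟨p, q, hp, hq, hpq, hcyc, hcard⟩ |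
      ⟨p, q, r, hp, hq, hr, hpq, hpr, hqr, hcyc, hcard⟩)
    · exact hG.not_hasCoprimeK23 hp
    · exact not_hasCoprimeK23_of_existsUnique_card_eq hp hq hcard hQ
    · have := hcyc
      exact IsCyclic.not_hasCoprimeK23
        (by rw [hcard, Nat.card_divisors_sq_mul_sq hp hq hpq]; norm_num)
    · have := hcyc
      exact IsCyclic.not_hasCoprimeK23
        (by rw [hcard, Nat.card_divisors_mul_mul hp hq hr hpq hpr hqr]; norm_num)

theorem coprimeGraph_K23_free_iff {G : Type*} [Group G] [Finite G]
    (hG : 1 < Nat.card G) :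
    (¬ ∃ f : completeBipartiteGraph (Fin 2) (Fin 3) →g coprimeGraph G,
        Function.Injective f) ↔
      ((∃ p : ℕ, p.Prime ∧ IsPGroup p G) ∨
       (∃ p q α : ℕ, p.Prime ∧ q.Prime ∧ p ≠ q ∧ 1 ≤ α ∧ Nat.card G = p ^ α * q ∧
          ∃! H : Subgroup G, Nat.card H = q) ∨
       (∃ p q : ℕ, p.Prime ∧ q.Prime ∧ p ≠ q ∧ IsCyclic G ∧
          Nat.card G = p ^ 2 * q ^ 2) ∨
       (∃ p q r : ℕ, p.Prime ∧ q.Prime ∧ r.Prime ∧ p ≠ q ∧ p ≠ r ∧ q ≠ r ∧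
          IsCyclic G ∧ Nat.card G = p * q * r)) :=
  coprimeGraph_K23_free_iff_general
end

section
/- Let G be a finite group with |G| > 1. The coprime graph 𝒫(G) is bipartite (i.e. 2-colorable) if and only if |G| has at most two distinct prime divisors. -/
open SimpleGraph

/-!
If three distinct primes divide `|G|`, Sylow subgroups for them are proper, nontrivial and of
pairwise coprime orders, so they form a triangle. If at most two primes divide `|G|`, fix one of
them, `p`, and colour each subgroup by whether `p` divides its order: two adjacent subgroups whose
orders are both prime to `p` would each have a prime factor in the remaining set of at most one
prime, so they could not be coprime.
-/

namespace Nat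

lemma not_coprime_of_not_dvd_of_primeFactors_card_le_two {n p a b : ℕ}
    (hn : n.primeFactors.card ≤ 2) (hp : p ∈ n.primeFactors) (ha : a ∣ n) (hb : b ∣ n)
    (ha₁ : a ≠ 1) (hb₁ : b ≠ 1) (hpa : ¬p ∣ a) (hpb : ¬p ∣ b) : ¬a.Coprime b := by
  obtain ⟨r, hr, hra⟩ := exists_prime_and_dvd ha₁
  obtain ⟨s, hs, hsb⟩ := exists_prime_and_dvd hb₁
  have hn₀ : n ≠ 0 := (mem_primeFactors.mp hp).2.2
  have hr_mem : r ∈ n.primeFactors.erase p :=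
    Finset.mem_erase.mpr ⟨fun h => hpa (h ▸ hra), mem_primeFactors.mpr ⟨hr, hra.trans ha, hn₀⟩⟩
  have hs_mem : s ∈ n.primeFactors.erase p :=
    Finset.mem_erase.mpr ⟨fun h => hpb (h ▸ hsb), mem_primeFactors.mpr ⟨hs, hsb.trans hb, hn₀⟩⟩
  have hrs : r = s := by
    refine Finset.card_le_one.mp ?_ r hr_mem s hs_mem
    rw [Finset.card_erase_of_mem hp]
    omega
  exact not_coprime_of_dvd_of_dvd hr.one_lt hra (hrs ▸ hsb)

end Nat

namespace coprimeGraph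

variable {G : Type*} [Group G]

lemma card_ne_one (v : {H : Subgroup G // H ≠ ⊥ ∧ H ≠ ⊤}) : Nat.card v.1 ≠ 1 :=
  fun h => v.2.1 (Subgroup.card_eq_one.mp h)

lemma adj_iff {v w : {H : Subgroup G // H ≠ ⊥ ∧ H ≠ ⊤}} :
    (coprimeGraph G).Adj v w ↔ (Nat.card v.1).Coprime (Nat.card w.1) := by
  refine ⟨And.right, fun h => ⟨?_, h⟩⟩
  rintro rfl
  exact card_ne_one v ((Nat.coprime_self _).mp h)

lemma colorable_two {p : ℕ} (hp : p ∈ (Nat.card G).primeFactors)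
    (hG : (Nat.card G).primeFactors.card ≤ 2) : (coprimeGraph G).Colorable 2 := by
  refine (Coloring.mk (fun v => decide (p ∣ Nat.card v.1)) fun {v w} hvw hcol => ?_).colorable
  rw [adj_iff] at hvw
  rw [decide_eq_decide] at hcol
  by_cases hpv : p ∣ Nat.card v.1
  · exact Nat.not_coprime_of_dvd_of_dvd (Nat.prime_of_mem_primeFactors hp).one_lt hpv
      (hcol.mp hpv) hvw
  · exact Nat.not_coprime_of_not_dvd_of_primeFactors_card_le_two hG hp
      (Subgroup.card_subgroup_dvd_card _) (Subgroup.card_subgroup_dvd_card _)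
      (card_ne_one v) (card_ne_one w) hpv (mt hcol.mpr hpv) hvw

variable [Finite G]

/-- A Sylow `p`-subgroup is a vertex as soon as a second prime divides `|G|`. -/
lemma exists_card_eq_ordProj {p q : ℕ} (hp : p ∈ (Nat.card G).primeFactors)
    (hq : q ∈ (Nat.card G).primeFactors) (hpq : p ≠ q) :
    ∃ v : {H : Subgroup G // H ≠ ⊥ ∧ H ≠ ⊤}, Nat.card v.1 = p ^ (Nat.card G).factorization p := by
  obtain ⟨hp, hpG, -⟩ := Nat.mem_primeFactors.mp hp
  obtain ⟨hq, hqG, -⟩ := Nat.mem_primeFactors.mp hq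
  have : Fact p.Prime := ⟨hp⟩
  obtain ⟨P⟩ := (inferInstance : Nonempty (Sylow p G))
  refine ⟨⟨P, P.ne_bot_of_dvd_card hpG, fun htop => hpq ?_⟩, P.card_eq_multiplicity⟩
  have hqP : q ∣ p ^ (Nat.card G).factorization p := by
    rw [← P.card_eq_multiplicity, htop, Subgroup.card_top]
    exact hqG
  exact ((Nat.prime_dvd_prime_iff_eq hq hp).mp (hq.dvd_of_dvd_pow hqP)).symm

lemma not_cliqueFree_three {p q r : ℕ} (hp : p ∈ (Nat.card G).primeFactors)
    (hq : q ∈ (Nat.card G).primeFactors) (hr : r ∈ (Nat.card G).primeFactors)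
    (hpq : p ≠ q) (hpr : p ≠ r) (hqr : q ≠ r) : ¬(coprimeGraph G).CliqueFree 3 := by
  classical
  obtain ⟨u, hu⟩ := exists_card_eq_ordProj hp hq hpq
  obtain ⟨v, hv⟩ := exists_card_eq_ordProj hq hr hqr
  obtain ⟨w, hw⟩ := exists_card_eq_ordProj hr hp hpr.symm
  have hp' := Nat.prime_of_mem_primeFactors hp
  have hq' := Nat.prime_of_mem_primeFactors hq
  have hr' := Nat.prime_of_mem_primeFactors hr
  refine fun h => h {u, v, w} (is3Clique_triple_iff.mpr ⟨?_, ?_, ?_⟩)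
  · rw [adj_iff, hu, hv]; exact Nat.coprime_pow_primes _ _ hp' hq' hpq
  · rw [adj_iff, hu, hw]; exact Nat.coprime_pow_primes _ _ hp' hr' hpr
  · rw [adj_iff, hv, hw]; exact Nat.coprime_pow_primes _ _ hq' hr' hqr

end coprimeGraph

theorem coprimeGraph_bipartite_iff {G : Type*} [Group G] [Finite G]
    (hG : 1 < Nat.card G) :
    (coprimeGraph G).Colorable 2 ↔ (Nat.card G).primeFactors.card ≤ 2 := by
  constructor
  · intro hcol
    by_contra! h
    obtain ⟨p, hp, q, hq, r, hr, hpq, hpr, hqr⟩ := Finset.two_lt_card.mp h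
    exact coprimeGraph.not_cliqueFree_three hp hq hr hpq hpr hqr (hcol.cliqueFree (by norm_num))
  · intro h
    obtain ⟨p, hp⟩ := Nat.nonempty_primeFactors.mpr hG
    exact coprimeGraph.colorable_two hp h
end

section
/- Let G be a finite group. If either (i) |G| = p·q for two distinct primes p, q, or (ii) |G| = p²·q for two distinct primes p, q and G has no subgroup of order p·q, then 𝒫(G) is a complete bipartite graph, i.e. 𝒫(G) is isomorphic to the complete bipartite graph K_{m,n} for some m, n ≥ 1. (This covers the groups ℤ_{pq}, ℤ_q⋊ℤ_p, (ℤ_p×ℤ_p)⋊ℤ_q and A₄ of the paper's classification.) -/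
open SimpleGraph

theorem Nat.eq_or_eq_mul_of_dvd_of_dvd_mul_prime {m n p : ℕ} (hp : p.Prime) (hm : m ≠ 0)
    (hmn : m ∣ n) (hn : n ∣ m * p) : n = m ∨ n = m * p := by
  obtain ⟨e, rfl⟩ := hmn
  rcases (Nat.dvd_prime hp).1 (Nat.dvd_of_mul_dvd_mul_left (Nat.pos_of_ne_zero hm) hn) with
    rfl | rfl
  · exact .inl (mul_one m)
  · exact .inr rfl

theorem Nat.dvd_pow_or_dvd_pow_of_dvd_mul {p q a b n : ℕ} (hp : p.Prime) (hq : q.Prime)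
    (hpq : p ≠ q) (hn : n ∣ p ^ a * q ^ b) (hpqn : ¬ p * q ∣ n) : n ∣ p ^ a ∨ n ∣ q ^ b := by
  by_cases hpn : p ∣ n
  · have hqn : ¬ q ∣ n := fun hqn =>
      hpqn (((Nat.coprime_primes hp hq).2 hpq).mul_dvd_of_dvd_of_dvd hpn hqn)
    exact .inl (((hq.coprime_iff_not_dvd.2 hqn).symm.pow_right b).dvd_of_dvd_mul_right hn)
  · exact .inr (((hp.coprime_iff_not_dvd.2 hpn).symm.pow_right a).dvd_of_dvd_mul_left hn)

namespace SimpleGraph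

variable {V : Type*} {Γ : SimpleGraph V}

def isoCompleteBipartiteGraphOfAdjIff (P : V → Prop) [DecidablePred P]
    (hadj : ∀ v w, Γ.Adj v w ↔ (P v ↔ ¬ P w)) :
    Γ ≃g completeBipartiteGraph {v // P v} {v // ¬ P v} where
  toEquiv := (Equiv.sumCompl P).symm
  map_rel_iff' := by
    intro v w
    by_cases hv : P v <;> by_cases hw : P w <;>
      simp [hadj, hv, hw, Equiv.sumCompl_symm_apply_of_pos, Equiv.sumCompl_symm_apply_of_neg]

theorem exists_iso_completeBipartiteGraph_fin_of_adj_iff [Finite V] (P : V → Prop)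
    (hadj : ∀ v w, Γ.Adj v w ↔ (P v ↔ ¬ P w)) (hP : ∃ v, P v) (hnP : ∃ v, ¬ P v) :
    ∃ m n : ℕ, 1 ≤ m ∧ 1 ≤ n ∧ Nonempty (Γ ≃g completeBipartiteGraph (Fin m) (Fin n)) := by
  classical
  have : Nonempty {v // P v} := nonempty_subtype.2 hP
  have : Nonempty {v // ¬ P v} := nonempty_subtype.2 hnP
  exact ⟨_, _, Nat.card_pos, Nat.card_pos, ⟨(isoCompleteBipartiteGraphOfAdjIff P hadj).trans
    (completeBipartiteGraphCongr (Finite.equivFin _) (Finite.equivFin _))⟩⟩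

end SimpleGraph

section CoprimeGraph

variable {G : Type*} [Group G]

namespace IsPGroup

theorem dvd_card_of_ne_bot {p : ℕ} [Fact p.Prime] {H : Subgroup G} (hH : IsPGroup p H)
    (hne : H ≠ ⊥) : p ∣ Nat.card H :=
  hH.card_eq_or_dvd.resolve_left (mt Subgroup.card_eq_one.mp hne)

theorem not_isPGroup_of_ne_bot {p q : ℕ} [Fact p.Prime] [Fact q.Prime] (hpq : p ≠ q)
    {H : Subgroup G} (hH : IsPGroup p H) (hne : H ≠ ⊥) : ¬ IsPGroup q H := fun hq =>
  hne (disjoint_self.mp (IsPGroup.disjoint_of_ne p q hpq H H hH hq))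

theorem coprime_card_iff [Finite G] {p q : ℕ} [Fact p.Prime] [Fact q.Prime] (hpq : p ≠ q)
    {H K : Subgroup G} (hH : IsPGroup p H ∨ IsPGroup q H) (hK : IsPGroup p K ∨ IsPGroup q K)
    (hH₀ : H ≠ ⊥) (hK₀ : K ≠ ⊥) :
    Nat.Coprime (Nat.card H) (Nat.card K) ↔ (IsPGroup q H ↔ ¬ IsPGroup q K) := by
  have not_coprime {r : ℕ} [hr : Fact r.Prime] (hHr : IsPGroup r H) (hKr : IsPGroup r K) :
      ¬ Nat.Coprime (Nat.card H) (Nat.card K) :=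
    Nat.not_coprime_of_dvd_of_dvd hr.out.one_lt (hHr.dvd_card_of_ne_bot hH₀)
      (hKr.dvd_card_of_ne_bot hK₀)
  rcases hH with hHp | hHq <;> rcases hK with hKp | hKq
  · simp [not_coprime hHp hKp, hHp.not_isPGroup_of_ne_bot hpq hH₀,
      hKp.not_isPGroup_of_ne_bot hpq hK₀]
  · exact iff_of_true (coprime_card_of_ne p q hpq H K hHp hKq)
      (by simp [hHp.not_isPGroup_of_ne_bot hpq hH₀, hKq])
  · exact iff_of_true (coprime_card_of_ne q p hpq.symm H K hHq hKp)
      (by simp [hKp.not_isPGroup_of_ne_bot hpq hK₀, hHq])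
  · simp [not_coprime hHq hKq, hHq, hKq]

end IsPGroup

theorem Subgroup.exists_ne_bot_ne_top_isPGroup [Finite G] {p q : ℕ} (hp : p.Prime)
    (hq : q.Prime) (hpq : p ≠ q) (hpG : p ∣ Nat.card G) (hqG : q ∣ Nat.card G) :
    ∃ H : Subgroup G, H ≠ ⊥ ∧ H ≠ ⊤ ∧ IsPGroup p H := by
  have : Fact p.Prime := ⟨hp⟩
  obtain ⟨H, hH⟩ := Sylow.exists_subgroup_card_pow_prime p (n := 1) (by rwa [pow_one])
  rw [pow_one] at hH
  refine ⟨H, fun h => hp.ne_one ?_, fun h => hpq ?_, IsPGroup.of_card (n := 1) (by rwa [pow_one])⟩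
  · rwa [h, Subgroup.card_bot, eq_comm] at hH
  · rw [h, Subgroup.card_top] at hH
    exact ((Nat.prime_dvd_prime_iff_eq hq hp).1 (hH ▸ hqG)).symm

theorem Subgroup.isPGroup_or_isPGroup_of_not_mul_dvd_card {p q a b : ℕ} (hp : p.Prime)
    (hq : q.Prime) (hpq : p ≠ q) (hG : Nat.card G = p ^ a * q ^ b) (H : Subgroup G)
    (hH : ¬ p * q ∣ Nat.card H) : IsPGroup p H ∨ IsPGroup q H :=
  (Nat.dvd_pow_or_dvd_pow_of_dvd_mul hp hq hpq (hG ▸ H.card_subgroup_dvd_card) hH).imp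
    IsPGroup.of_card_dvd_pow IsPGroup.of_card_dvd_pow

theorem coprimeGraph_adj_iff {H K : {H : Subgroup G // H ≠ ⊥ ∧ H ≠ ⊤}} :
    (coprimeGraph G).Adj H K ↔ Nat.Coprime (Nat.card H.1) (Nat.card K.1) :=
  ⟨And.right, fun h =>
    ⟨by rintro rfl; exact H.2.1 (Subgroup.card_eq_one.mp ((Nat.coprime_self _).mp h)), h⟩⟩

theorem coprimeGraph_exists_iso_completeBipartiteGraph [Finite G] {p q a b : ℕ} (hp : p.Prime)
    (hq : q.Prime) (hpq : p ≠ q) (ha : a ≠ 0) (hb : b ≠ 0) (hG : Nat.card G = p ^ a * q ^ b)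
    (hproper : ∀ H : Subgroup G, H ≠ ⊤ → ¬ p * q ∣ Nat.card H) :
    ∃ m n : ℕ, 1 ≤ m ∧ 1 ≤ n ∧
      Nonempty (coprimeGraph G ≃g completeBipartiteGraph (Fin m) (Fin n)) := by
  have : Fact p.Prime := ⟨hp⟩
  have : Fact q.Prime := ⟨hq⟩
  have hpG : p ∣ Nat.card G := hG ▸ dvd_mul_of_dvd_left (dvd_pow_self p ha) _
  have hqG : q ∣ Nat.card G := hG ▸ dvd_mul_of_dvd_right (dvd_pow_self q hb) _
  have hsplit (H : {H : Subgroup G // H ≠ ⊥ ∧ H ≠ ⊤}) : IsPGroup p H.1 ∨ IsPGroup q H.1 :=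
    H.1.isPGroup_or_isPGroup_of_not_mul_dvd_card hp hq hpq hG (hproper H.1 H.2.2)
  refine exists_iso_completeBipartiteGraph_fin_of_adj_iff (fun H => IsPGroup q H.1)
    (fun H K => ?_) ?_ ?_
  · rw [coprimeGraph_adj_iff]
    exact IsPGroup.coprime_card_iff hpq (hsplit H) (hsplit K) H.2.1 K.2.1
  · obtain ⟨H, hH₀, hH₁, hHq⟩ := Subgroup.exists_ne_bot_ne_top_isPGroup hq hp hpq.symm hqG hpG
    exact ⟨⟨H, hH₀, hH₁⟩, hHq⟩
  · obtain ⟨H, hH₀, hH₁, hHp⟩ := Subgroup.exists_ne_bot_ne_top_isPGroup hp hq hpq hpG hqG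
    exact ⟨⟨H, hH₀, hH₁⟩, hHp.not_isPGroup_of_ne_bot hpq hH₀⟩

end CoprimeGraph

theorem coprimeGraph_completeBipartite {G : Type*} [Group G] [Finite G]
    (h : (∃ p q : ℕ, p.Prime ∧ q.Prime ∧ p ≠ q ∧ Nat.card G = p * q) ∨
      (∃ p q : ℕ, p.Prime ∧ q.Prime ∧ p ≠ q ∧ Nat.card G = p ^ 2 * q ∧
        ¬ ∃ H : Subgroup G, Nat.card H = p * q)) :
    ∃ m n : ℕ, 1 ≤ m ∧ 1 ≤ n ∧
      Nonempty (coprimeGraph G ≃g completeBipartiteGraph (Fin m) (Fin n)) := by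
  rcases h with ⟨p, q, hp, hq, hpq, hG⟩ | ⟨p, q, hp, hq, hpq, hG, hno⟩
  · refine coprimeGraph_exists_iso_completeBipartiteGraph (a := 1) (b := 1) hp hq hpq
      one_ne_zero one_ne_zero (by rw [hG, pow_one, pow_one]) fun H hH hdvd => hH ?_
    exact Subgroup.eq_top_of_card_eq H (Nat.dvd_antisymm H.card_subgroup_dvd_card (hG ▸ hdvd))
  · refine coprimeGraph_exists_iso_completeBipartiteGraph (a := 2) (b := 1) hp hq hpq
      two_ne_zero one_ne_zero (by rw [hG, pow_one]) fun H hH hdvd => ?_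
    have hG' : Nat.card G = p * q * p := by rw [hG]; ring
    rcases Nat.eq_or_eq_mul_of_dvd_of_dvd_mul_prime hp (mul_ne_zero hp.ne_zero hq.ne_zero) hdvd
      (hG' ▸ H.card_subgroup_dvd_card) with hpqH | hH'
    · exact hno ⟨H, hpqH⟩
    · exact hH (Subgroup.eq_top_of_card_eq H (hH'.trans hG'.symm))
end

section
/- For every finite group G and every natural number n ≥ 3, the coprime graph 𝒫(G) is not isomorphic to the cycle graph Cₙ on n vertices. -/
open SimpleGraph

/-!
If `𝒫(G) ≃ Cₙ` with `n ≥ 3`, every vertex has exactly two neighbours, and the neighbours of a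
subgroup of prime order `r` are the vertices of order prime to `r`. Two adjacent vertices give
distinct primes `p`, `q` dividing `|G|`. All nontrivial `p`-subgroups are neighbours of a subgroup
of order `q`, so there are at most two of them, which forces the subgroup of order `p` to be unique,
hence normal; likewise for `q`. Thus `G` has a cyclic subgroup `Z` of order `pq`. If `Z = G`, a
subgroup of order `p` has the subgroup of order `q` as its only neighbour. Otherwise `Z` is a
vertex, a neighbour of `Z` provides a prime `r ∉ {p, q}`, and the subgroups of orders `p`, `q`
and `Z` are three neighbours of a subgroup of order `r`.
-/

section Subgroups

variable {G : Type*} [Group G]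

theorem Subgroup.normal_of_forall_card_eq {H : Subgroup G}
    (h : ∀ K : Subgroup G, Nat.card K = Nat.card H → K = H) : H.Normal :=
  have : H.Characteristic := Subgroup.characteristic_iff_map_eq.mpr fun ϕ =>
    h _ (Subgroup.card_map_of_injective ϕ.injective)
  Subgroup.normal_of_characteristic H

theorem orderOf_mul_eq_mul_orderOf_of_zpowers_normal {x y : G}
    (hx : (Subgroup.zpowers x).Normal) (hy : (Subgroup.zpowers y).Normal)
    (hxy : (orderOf x).Coprime (orderOf y)) : orderOf (x * y) = orderOf x * orderOf y := by
  have hdisj : Disjoint (Subgroup.zpowers x) (Subgroup.zpowers y) :=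
    Subgroup.disjoint_of_coprime_natCard (by rwa [Nat.card_zpowers, Nat.card_zpowers])
  exact (Subgroup.commute_of_normal_of_disjoint _ _ hx hy hdisj x y
    (Subgroup.mem_zpowers x) (Subgroup.mem_zpowers y)).orderOf_mul_eq_mul_orderOf_of_coprime hxy

theorem Subgroup.ne_top_of_not_dvd_card {H : Subgroup G} {q : ℕ} (hG : q ∣ Nat.card G)
    (hH : ¬ q ∣ Nat.card H) : H ≠ ⊤ := by
  rintro rfl
  exact hH (Subgroup.card_top (G := G) ▸ hG)

/-- Otherwise a Sylow `p`-subgroup `S ≥ H` would have order `p`, so `H` and `K` would be two of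
exactly two Sylow `p`-subgroups, against `card (Sylow p G) ≡ 1 [MOD p]`. -/
theorem Subgroup.eq_of_card_eq_prime_of_ncard_pSubgroups_le_two [Finite G] {p : ℕ}
    [hp : Fact p.Prime] (h : {P : Subgroup G | P ≠ ⊥ ∧ IsPGroup p P}.ncard ≤ 2)
    {H K : Subgroup G} (hH : Nat.card H = p) (hK : Nat.card K = p) : H = K := by
  by_contra hHK
  have mem {P : Subgroup G} (hP : IsPGroup p P) (hcard : Nat.card P = p) :
      P ∈ {P : Subgroup G | P ≠ ⊥ ∧ IsPGroup p P} :=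
    ⟨(Subgroup.one_lt_card_iff_ne_bot P).mp (hcard ▸ hp.out.one_lt), hP⟩
  have hHp : IsPGroup p H := IsPGroup.of_card (n := 1) (by rw [hH, pow_one])
  have hKp : IsPGroup p K := IsPGroup.of_card (n := 1) (by rw [hK, pow_one])
  obtain ⟨S, hHS⟩ := hHp.exists_le_sylow
  have hS : Nat.card S = p := by
    by_contra hS
    refine h.not_gt ((Set.two_lt_ncard_iff).mpr ⟨H, K, S, mem hHp hH, mem hKp hK,
      ⟨ne_bot_of_le_ne_bot (mem hHp hH).1 hHS, S.isPGroup'⟩, hHK, ?_, ?_⟩)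
    · rintro rfl; exact hS hH
    · rintro rfl; exact hS hK
  have hpow : p = p ^ (Nat.card G).factorization p := hS.symm.trans S.card_eq_multiplicity
  have hcardSylow : Nat.card (Sylow p G) = 2 := by
    refine le_antisymm ?_ ?_
    · refine (Nat.card_le_card_of_injective (fun T : Sylow p G => (⟨T, mem T.isPGroup'
        (T.card_eq_multiplicity.trans hpow.symm)⟩ : {P : Subgroup G | P ≠ ⊥ ∧ IsPGroup p P}))
        fun T U hTU => Sylow.ext (congrArg Subtype.val hTU)).trans ?_
      rwa [Nat.card_coe_set_eq]
    · refine Finite.one_lt_card_iff_nontrivial.mpr (nontrivial_of_ne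
        (Sylow.ofCard H (hH.trans hpow)) (Sylow.ofCard K (hK.trans hpow)) fun hHK' => hHK ?_)
      simpa using congrArg (fun T : Sylow p G => (T : Subgroup G)) hHK'
  have h21 : 2 ≡ 1 [MOD p] := hcardSylow ▸ card_sylow_modEq_one p G
  exact hp.out.not_dvd_one ((Nat.modEq_iff_dvd' (by norm_num)).mp h21.symm)

end Subgroups

section CoprimeGraph

variable {G : Type*} [Group G]

theorem coprimeGraph_adj_iff_s9 {v w : {H : Subgroup G // H ≠ ⊥ ∧ H ≠ ⊤}} :
    (coprimeGraph G).Adj v w ↔ (Nat.card v.1).Coprime (Nat.card w.1) := by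
  refine ⟨And.right, fun h => ⟨?_, h⟩⟩
  rintro rfl
  exact v.2.1 (Subgroup.card_eq_one.mp ((Nat.coprime_self _).mp h))

theorem coprimeGraph_mem_neighborSet_iff {X v : {H : Subgroup G // H ≠ ⊥ ∧ H ≠ ⊤}}
    (hX : (Nat.card X.1).Prime) :
    v ∈ (coprimeGraph G).neighborSet X ↔ ¬ Nat.card X.1 ∣ Nat.card v.1 := by
  rw [mem_neighborSet, coprimeGraph_adj_iff_s9, hX.coprime_iff_not_dvd]

variable [Finite G]

theorem exists_coprimeGraph_vertex_card_eq_prime {p q : ℕ} (hp : p.Prime) (hq : q.Prime)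
    (hpq : p ≠ q) (hpG : p ∣ Nat.card G) (hqG : q ∣ Nat.card G) :
    ∃ X : {H : Subgroup G // H ≠ ⊥ ∧ H ≠ ⊤}, Nat.card X.1 = p := by
  have : Fact p.Prime := ⟨hp⟩
  obtain ⟨x, hx⟩ := exists_prime_orderOf_dvd_card' p hpG
  have hcard : Nat.card (Subgroup.zpowers x) = p := by rw [Nat.card_zpowers, hx]
  have hqx : ¬ q ∣ Nat.card (Subgroup.zpowers x) := by
    rw [hcard, Nat.prime_dvd_prime_iff_eq hq hp]
    exact hpq.symm
  exact ⟨⟨_, (Subgroup.one_lt_card_iff_ne_bot _).mp (hcard ▸ hp.one_lt),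
    Subgroup.ne_top_of_not_dvd_card hqG hqx⟩, hcard⟩

theorem ncard_pSubgroups_le_two_of_coprimeGraph
    (hdeg : ∀ v, ((coprimeGraph G).neighborSet v).ncard = 2) {p : ℕ} [hp : Fact p.Prime]
    {X : {H : Subgroup G // H ≠ ⊥ ∧ H ≠ ⊤}} (hX : (Nat.card X.1).Prime)
    (hpX : p ≠ Nat.card X.1) : {P : Subgroup G | P ≠ ⊥ ∧ IsPGroup p P}.ncard ≤ 2 := by
  have hsub : {P : Subgroup G | P ≠ ⊥ ∧ IsPGroup p P} ⊆
      Subtype.val '' (coprimeGraph G).neighborSet X := by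
    rintro P ⟨hP, hPp⟩
    obtain ⟨k, hk⟩ := IsPGroup.iff_card.mp hPp
    have hXP : ¬ Nat.card X.1 ∣ Nat.card P := by
      rw [hk]
      exact fun h => hpX ((Nat.prime_dvd_prime_iff_eq hX hp.out).mp (hX.dvd_of_dvd_pow h)).symm
    exact ⟨⟨P, hP, Subgroup.ne_top_of_not_dvd_card (Subgroup.card_subgroup_dvd_card X.1) hXP⟩,
      (coprimeGraph_mem_neighborSet_iff hX).mpr hXP, rfl⟩
  calc _ ≤ _ := Set.ncard_le_ncard hsub
    _ ≤ _ := Set.ncard_image_le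
    _ = 2 := hdeg X

theorem Subgroup.eq_of_card_eq_prime_of_coprimeGraph
    (hdeg : ∀ v, ((coprimeGraph G).neighborSet v).ncard = 2) {p q : ℕ} (hp : p.Prime)
    (hq : q.Prime) (hpq : p ≠ q) (hpG : p ∣ Nat.card G) (hqG : q ∣ Nat.card G)
    {H K : Subgroup G} (hH : Nat.card H = p) (hK : Nat.card K = p) : H = K := by
  have : Fact p.Prime := ⟨hp⟩
  obtain ⟨X, hX⟩ := exists_coprimeGraph_vertex_card_eq_prime hq hp hpq.symm hqG hpG
  exact Subgroup.eq_of_card_eq_prime_of_ncard_pSubgroups_le_two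
    (ncard_pSubgroups_le_two_of_coprimeGraph hdeg (hX ▸ hq) (hX ▸ hpq)) hH hK

theorem zpowers_normal_of_coprimeGraph
    (hdeg : ∀ v, ((coprimeGraph G).neighborSet v).ncard = 2) {p q : ℕ} (hp : p.Prime)
    (hq : q.Prime) (hpq : p ≠ q) (hqG : q ∣ Nat.card G) {x : G} (hx : orderOf x = p) :
    (Subgroup.zpowers x).Normal := by
  have hcard : Nat.card (Subgroup.zpowers x) = p := by rw [Nat.card_zpowers, hx]
  exact Subgroup.normal_of_forall_card_eq fun K hK =>
    Subgroup.eq_of_card_eq_prime_of_coprimeGraph hdeg hp hq hpq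
      (hx ▸ orderOf_dvd_natCard x) hqG (hK.trans hcard) hcard

theorem card_ne_mul_of_coprimeGraph (hdeg : ∀ v, ((coprimeGraph G).neighborSet v).ncard = 2)
    {p q : ℕ} (hp : p.Prime) (hq : q.Prime) (hpq : p ≠ q) : Nat.card G ≠ p * q := by
  intro hG
  have hpG : p ∣ Nat.card G := hG ▸ dvd_mul_right p q
  have hqG : q ∣ Nat.card G := hG ▸ dvd_mul_left q p
  obtain ⟨X, hX⟩ := exists_coprimeGraph_vertex_card_eq_prime hp hq hpq hpG hqG
  have hcard_nbr : ∀ v ∈ (coprimeGraph G).neighborSet X, Nat.card v.1 = q := by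
    intro v hv
    rw [coprimeGraph_mem_neighborSet_iff (hX ▸ hp), hX, ← hp.coprime_iff_not_dvd] at hv
    have hvq : Nat.card v.1 ∣ q :=
      hv.symm.dvd_of_dvd_mul_left (hG ▸ Subgroup.card_subgroup_dvd_card v.1)
    exact ((Nat.dvd_prime hq).mp hvq).resolve_left (mt Subgroup.card_eq_one.mp v.2.1)
  obtain ⟨v, w, hv, hw, hvw⟩ := (Set.one_lt_ncard_iff).mp (hdeg X ▸ one_lt_two)
  exact hvw (Subtype.ext (Subgroup.eq_of_card_eq_prime_of_coprimeGraph hdeg hq hp hpq.symm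
    hqG hpG (hcard_nbr v hv) (hcard_nbr w hw)))

theorem coprimeGraph_prime_eq_of_dvd_card
    (hdeg : ∀ v, ((coprimeGraph G).neighborSet v).ncard = 2)
    (Z : {H : Subgroup G // H ≠ ⊥ ∧ H ≠ ⊤}) {p q : ℕ} (hp : p.Prime) (hq : q.Prime)
    (hpZ : p ∣ Nat.card Z.1) (hqZ : q ∣ Nat.card Z.1) : p = q := by
  by_contra hpq
  obtain ⟨W, hW⟩ := Set.nonempty_of_ncard_ne_zero (s := (coprimeGraph G).neighborSet Z)
    (by rw [hdeg Z]; exact two_ne_zero)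
  set r := (Nat.card W.1).minFac
  have hr : r.Prime := Nat.minFac_prime (mt Subgroup.card_eq_one.mp W.2.1)
  have hrZ : ¬ r ∣ Nat.card Z.1 := fun h => hr.ne_one
    (Nat.eq_one_of_dvd_coprimes (coprimeGraph_adj_iff_s9.mp hW) h (Nat.minFac_dvd _))
  have hrp : r ≠ p := fun h => hrZ (h ▸ hpZ)
  have hrq : r ≠ q := fun h => hrZ (h ▸ hqZ)
  have hZG := Subgroup.card_subgroup_dvd_card Z.1
  have hrG : r ∣ Nat.card G := (Nat.minFac_dvd _).trans (Subgroup.card_subgroup_dvd_card W.1)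
  have hpG := hpZ.trans hZG
  have hqG := hqZ.trans hZG
  obtain ⟨Xp, hXp⟩ := exists_coprimeGraph_vertex_card_eq_prime hp hq hpq hpG hqG
  obtain ⟨Xq, hXq⟩ := exists_coprimeGraph_vertex_card_eq_prime hq hp (Ne.symm hpq) hqG hpG
  obtain ⟨Xr, hXr⟩ := exists_coprimeGraph_vertex_card_eq_prime hr hp hrp hrG hpG
  have mem {v} (hv : ¬ r ∣ Nat.card v.1) : v ∈ (coprimeGraph G).neighborSet Xr :=
    (coprimeGraph_mem_neighborSet_iff (hXr ▸ hr)).mpr (hXr ▸ hv)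
  refine (hdeg Xr).not_gt ((Set.two_lt_ncard_iff).mpr ⟨Xp, Xq, Z,
    mem (hXp ▸ mt (Nat.prime_dvd_prime_iff_eq hr hp).mp hrp),
    mem (hXq ▸ mt (Nat.prime_dvd_prime_iff_eq hr hq).mp hrq), mem hrZ, ?_, ?_, ?_⟩)
  · exact fun h => hpq (hXp ▸ hXq ▸ congrArg (fun v => Nat.card v.1) h)
  · rintro rfl; exact hpq ((Nat.prime_dvd_prime_iff_eq hq hp).mp (hXp ▸ hqZ)).symm
  · rintro rfl; exact hpq ((Nat.prime_dvd_prime_iff_eq hp hq).mp (hXq ▸ hpZ))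

theorem coprimeGraph_not_forall_ncard_neighborSet_eq_two
    (v : {H : Subgroup G // H ≠ ⊥ ∧ H ≠ ⊤}) :
    ¬ ∀ w, ((coprimeGraph G).neighborSet w).ncard = 2 := by
  intro hdeg
  obtain ⟨w, hw⟩ := Set.nonempty_of_ncard_ne_zero (s := (coprimeGraph G).neighborSet v)
    (by rw [hdeg v]; exact two_ne_zero)
  set p := (Nat.card v.1).minFac
  set q := (Nat.card w.1).minFac
  have hp : p.Prime := Nat.minFac_prime (mt Subgroup.card_eq_one.mp v.2.1)
  have hq : q.Prime := Nat.minFac_prime (mt Subgroup.card_eq_one.mp w.2.1)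
  have hpq : p ≠ q := fun h => hp.ne_one (Nat.eq_one_of_dvd_coprimes
    (coprimeGraph_adj_iff_s9.mp hw) (Nat.minFac_dvd _) (h ▸ Nat.minFac_dvd _))
  have hpG : p ∣ Nat.card G := (Nat.minFac_dvd _).trans (Subgroup.card_subgroup_dvd_card _)
  have hqG : q ∣ Nat.card G := (Nat.minFac_dvd _).trans (Subgroup.card_subgroup_dvd_card _)
  have : Fact p.Prime := ⟨hp⟩
  have : Fact q.Prime := ⟨hq⟩
  obtain ⟨x, hx⟩ := exists_prime_orderOf_dvd_card' p hpG
  obtain ⟨y, hy⟩ := exists_prime_orderOf_dvd_card' q hqG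
  have hZ : Nat.card (Subgroup.zpowers (x * y)) = p * q := by
    rw [Nat.card_zpowers, orderOf_mul_eq_mul_orderOf_of_zpowers_normal
      (zpowers_normal_of_coprimeGraph hdeg hp hq hpq hqG hx)
      (zpowers_normal_of_coprimeGraph hdeg hq hp hpq.symm hpG hy)
      (by rwa [hx, hy, Nat.coprime_primes hp hq]), hx, hy]
  by_cases hZtop : Subgroup.zpowers (x * y) = ⊤
  · exact card_ne_mul_of_coprimeGraph hdeg hp hq hpq (by rw [← Subgroup.card_top, ← hZtop, hZ])
  · have hZbot : Subgroup.zpowers (x * y) ≠ ⊥ := (Subgroup.one_lt_card_iff_ne_bot _).mp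
      (hZ ▸ hp.one_lt.trans_le (Nat.le_mul_of_pos_right p hq.pos))
    exact hpq (coprimeGraph_prime_eq_of_dvd_card hdeg ⟨_, hZbot, hZtop⟩ hp hq
      (hZ ▸ dvd_mul_right p q) (hZ ▸ dvd_mul_left q p))

end CoprimeGraph

theorem coprimeGraph_not_cycle {G : Type*} [Group G] [Finite G] (n : ℕ) (hn : 3 ≤ n) :
    IsEmpty (coprimeGraph G ≃g SimpleGraph.cycleGraph n) := by
  refine ⟨fun f => ?_⟩
  obtain ⟨m, rfl⟩ : ∃ m, n = m + 3 := ⟨n - 3, by omega⟩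
  refine coprimeGraph_not_forall_ncard_neighborSet_eq_two (f.symm 0) fun v => ?_
  rw [← Nat.card_coe_set_eq, Nat.card_congr (f.mapNeighborSet v), Nat.card_eq_fintype_card,
    card_neighborSet_eq_degree, cycleGraph_degree_three_le]
end

section
/- Let G be a finite group whose order is neither 1 nor a prime, and suppose G has no proper subgroup H with π(H) = π(G). Then 𝒫(G) is connected and its diameter is at most 3 (the extended diameter of 𝒫(G) is ≤ 3). -/
open SimpleGraph

/-!
Every proper subgroup `H` misses some prime `p` of `|G|`, so `H` is adjacent to any vertex of
`p`-power order, for instance a Sylow `p`-subgroup. That Sylow subgroup is proper: otherwise `G`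
is a `p`-group of non-prime order, and a subgroup of order `p` is proper with the same prime
divisors as `G`. Vertices of `p`-power and `q`-power order are adjacent when `p ≠ q`, so any two
vertices are joined by a path `H — P — Q — K` of length at most three.
-/

lemma Nat.coprime_of_primeFactors_eq_singleton {a b p : ℕ} (ha : a ≠ 0)
    (hb : b.primeFactors = {p}) (hpa : p ∉ a.primeFactors) : a.Coprime b := by
  have hb0 : b ≠ 0 := by
    rintro rfl
    simp at hb
  rw [← Nat.disjoint_primeFactors ha hb0, hb]
  simpa using hpa

section

variable {G : Type*} [Group G] [Finite G]

lemma Sylow.primeFactors_card {p : ℕ} [Fact p.Prime]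
    (P : Sylow p G) (hp : p ∣ Nat.card G) : (Nat.card P).primeFactors = {p} := by
  have hpp : p.Prime := Fact.out
  rw [P.card_eq_multiplicity,
    Nat.primeFactors_prime_pow (hpp.factorization_pos_of_dvd Nat.card_pos.ne' hp).ne' hpp]

lemma Sylow.ne_top_of_forall_primeFactors_ne (hG : ¬ (Nat.card G).Prime)
    (h : ∀ H : Subgroup G, H ≠ ⊤ →
      (Nat.card H).primeFactors ≠ (Nat.card G).primeFactors)
    {p : ℕ} [Fact p.Prime] (hp : p ∣ Nat.card G) (P : Sylow p G) :
    (P : Subgroup G) ≠ ⊤ := by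
  intro hP
  have hπG : (Nat.card G).primeFactors = {p} := by
    rw [← Subgroup.card_top (G := G), ← hP]
    exact P.primeFactors_card hp
  obtain ⟨K, hK⟩ := Sylow.exists_subgroup_card_pow_prime p (n := 1) (by rwa [pow_one])
  rw [pow_one] at hK
  have hKtop : K ≠ ⊤ := by
    rintro rfl
    exact hG (Subgroup.card_top (G := G) ▸ hK ▸ Fact.out)
  exact h K hKtop (by rw [hK, Nat.Prime.primeFactors Fact.out, hπG])

lemma exists_vertex_primeFactors_eq_singleton (hG : ¬ (Nat.card G).Prime)
    (h : ∀ H : Subgroup G, H ≠ ⊤ →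
      (Nat.card H).primeFactors ≠ (Nat.card G).primeFactors)
    {p : ℕ} (hp : p ∈ (Nat.card G).primeFactors) :
    ∃ V : {H : Subgroup G // H ≠ ⊥ ∧ H ≠ ⊤}, (Nat.card V.1).primeFactors = {p} := by
  obtain ⟨hpp, hpG, -⟩ := Nat.mem_primeFactors.mp hp
  have : Fact p.Prime := ⟨hpp⟩
  obtain ⟨P⟩ : Nonempty (Sylow p G) := inferInstance
  exact ⟨⟨P, P.ne_bot_of_dvd_card hpG, P.ne_top_of_forall_primeFactors_ne hG h hpG⟩,
    P.primeFactors_card hpG⟩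

lemma Subgroup.exists_primeFactors_card_notMem (H : Subgroup G)
    (h : (Nat.card H).primeFactors ≠ (Nat.card G).primeFactors) :
    ∃ p ∈ (Nat.card G).primeFactors, p ∉ (Nat.card H).primeFactors :=
  Finset.exists_of_ssubset <|
    (Nat.primeFactors_mono H.card_subgroup_dvd_card Nat.card_pos.ne').ssubset_of_ne h

lemma coprimeGraph_adj_of_primeFactors_eq_singleton
    {u v : {H : Subgroup G // H ≠ ⊥ ∧ H ≠ ⊤}} {p : ℕ}
    (hv : (Nat.card v.1).primeFactors = {p}) (hu : p ∉ (Nat.card u.1).primeFactors) :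
    (coprimeGraph G).Adj u v :=
  ⟨by rintro rfl; exact hu (hv ▸ Finset.mem_singleton_self p),
    Nat.coprime_of_primeFactors_eq_singleton Nat.card_pos.ne' hv hu⟩

lemma coprimeGraph_exists_walk_length_le_three (hG : ¬ (Nat.card G).Prime)
    (h : ∀ H : Subgroup G, H ≠ ⊤ →
      (Nat.card H).primeFactors ≠ (Nat.card G).primeFactors)
    (u v : {H : Subgroup G // H ≠ ⊥ ∧ H ≠ ⊤}) :
    ∃ w : (coprimeGraph G).Walk u v, w.length ≤ 3 := by
  obtain ⟨p, hpG, hpu⟩ := u.1.exists_primeFactors_card_notMem (h u.1 u.2.2)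
  obtain ⟨q, hqG, hqv⟩ := v.1.exists_primeFactors_card_notMem (h v.1 v.2.2)
  obtain ⟨P, hP⟩ := exists_vertex_primeFactors_eq_singleton hG h hpG
  obtain ⟨Q, hQ⟩ := exists_vertex_primeFactors_eq_singleton hG h hqG
  have hQv : (coprimeGraph G).Adj Q v :=
    (coprimeGraph_adj_of_primeFactors_eq_singleton hQ hqv).symm
  by_cases hpq : p = q
  · subst hpq
    exact ⟨.cons (coprimeGraph_adj_of_primeFactors_eq_singleton hQ hpu) (.cons hQv .nil),
      by simp⟩
  · have hPQ : (coprimeGraph G).Adj P Q :=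
      coprimeGraph_adj_of_primeFactors_eq_singleton hQ (by simpa [hP] using Ne.symm hpq)
    exact ⟨.cons (coprimeGraph_adj_of_primeFactors_eq_singleton hP hpu)
      (.cons hPQ (.cons hQv .nil)), by simp⟩

end

theorem coprimeGraph_connected_ediam_le_three {G : Type*} [Group G] [Finite G]
    (h1 : Nat.card G ≠ 1) (hp : ¬ (Nat.card G).Prime)
    (h : ¬ ∃ H : Subgroup G, H ≠ ⊤ ∧
        (Nat.card H).primeFactors = (Nat.card G).primeFactors) :
    (coprimeGraph G).Connected ∧ (coprimeGraph G).ediam ≤ 3 := by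
  have h' : ∀ H : Subgroup G, H ≠ ⊤ →
      (Nat.card H).primeFactors ≠ (Nat.card G).primeFactors := fun H hH hπ => h ⟨H, hH, hπ⟩
  have hwalk := coprimeGraph_exists_walk_length_le_three hp h'
  obtain ⟨q, hq, hqG⟩ := Nat.exists_prime_and_dvd h1
  obtain ⟨V, -⟩ := exists_vertex_primeFactors_eq_singleton hp h'
    (Nat.mem_primeFactors.mpr ⟨hq, hqG, Nat.card_pos.ne'⟩)
  have : Nonempty {H : Subgroup G // H ≠ ⊥ ∧ H ≠ ⊤} := ⟨V⟩
  refine ⟨⟨fun u v => (hwalk u v).elim fun w _ => w.reachable⟩,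
    ediam_le_of_edist_le fun u v => ?_⟩
  obtain ⟨w, hw⟩ := hwalk u v
  exact w.edist_le.trans (by exact_mod_cast hw)
end

section
/- Let n > 1 be a natural number and let H be a nontrivial proper additive subgroup of ℤ/nℤ. Then the degree of H as a vertex of the coprime graph 𝒫(ℤ/nℤ) equals the number of divisors m of n with gcd(m, |H|) = 1, minus 1. Equivalently, writing n = p₁^{α₁}·p₂^{α₂}⋯p_k^{α_k} with distinct primes p_i, the degree of H equals (∏_{p_j ∤ |H|} (α_j + 1)) − 1. -/
open SimpleGraph

/-- The coprime graph of subgroups of an additive group `G`: vertices are the proper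
nontrivial additive subgroups of `G`, and two distinct vertices are adjacent iff their
orders are coprime. -/
def coprimeGraphAdd (G : Type*) [AddGroup G] :
    SimpleGraph {H : AddSubgroup G // H ≠ ⊥ ∧ H ≠ ⊤} where
  Adj H K := H ≠ K ∧ Nat.Coprime (Nat.card H.1) (Nat.card K.1)
  symm := ⟨fun _ _ h => ⟨h.1.symm, h.2.symm⟩⟩
  loopless := ⟨fun _ h => h.1 rfl⟩

/-! A subgroup of order `d` of a finite cyclic group of order `n` is the kernel of `x ↦ x ^ d`,
whose order is `gcd n d`; so the subgroups correspond to the divisors of `n` via their orders.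
A vertex `K` of the coprime graph is adjacent to `H ≠ ⊥` exactly when `|K|` is coprime to `|H|`:
this already forces `K ≠ H` and `K ≠ ⊤`, since `|H|` divides `|G|`. Hence the neighbours of `H`
correspond to the divisors of `n` coprime to `|H|`, except `1`. -/

section Cyclic

variable {G : Type*} [CommGroup G] [IsCyclic G] [Finite G]

@[to_additive]
theorem Subgroup.eq_ker_powMonoidHom_card (H : Subgroup G) :
    H = (powMonoidHom (Nat.card H) : G →* G).ker := by
  refine Subgroup.eq_of_le_of_card_ge (fun x hx => ?_) ?_
  · exact orderOf_dvd_iff_pow_eq_one.mp (H.orderOf_dvd_natCard hx)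
  · rw [IsCyclic.card_powMonoidHom_ker, Nat.gcd_eq_right H.card_subgroup_dvd_card]

@[to_additive]
theorem IsCyclic.card_subgroup_injective : Function.Injective fun H : Subgroup G => Nat.card H :=
  fun H K hHK => by
    rw [H.eq_ker_powMonoidHom_card, K.eq_ker_powMonoidHom_card]
    exact congrArg (fun d => (powMonoidHom d : G →* G).ker) hHK

@[to_additive]
theorem IsCyclic.exists_subgroup_card_eq {d : ℕ} (hd : d ∣ Nat.card G) :
    ∃ H : Subgroup G, Nat.card H = d :=
  ⟨_, (IsCyclic.card_powMonoidHom_ker G d).trans (Nat.gcd_eq_right hd)⟩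

end Cyclic

theorem coprimeGraphAdd_adj_iff {G : Type*} [AddGroup G]
    {H K : {H : AddSubgroup G // H ≠ ⊥ ∧ H ≠ ⊤}} :
    (coprimeGraphAdd G).Adj H K ↔ Nat.Coprime (Nat.card H.1) (Nat.card K.1) := by
  refine ⟨And.right, fun hcop => ⟨?_, hcop⟩⟩
  rintro rfl
  exact H.2.1 ((AddSubgroup.eq_bot_iff_card _).mpr ((Nat.coprime_self _).mp hcop))

theorem IsAddCyclic.image_card_neighborSet_coprimeGraphAdd {G : Type*} [AddCommGroup G]
    [IsAddCyclic G] [Finite G] (H : {H : AddSubgroup G // H ≠ ⊥ ∧ H ≠ ⊤}) :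
    (fun K => Nat.card K.1) '' (coprimeGraphAdd G).neighborSet H =
      ↑(((Nat.card G).divisors.filter (Nat.Coprime · (Nat.card H.1))).erase 1) := by
  have hH : Nat.card H.1 ≠ 1 := mt (AddSubgroup.eq_bot_iff_card _).mpr H.2.1
  ext d
  simp only [Set.mem_image, mem_neighborSet, coprimeGraphAdd_adj_iff, Finset.coe_erase,
    Finset.coe_filter, Nat.mem_divisors, Set.mem_sdiff, Set.mem_ofPred_eq, Set.mem_singleton_iff]
  constructor
  · rintro ⟨K, hcop, rfl⟩
    exact ⟨⟨⟨K.1.card_addSubgroup_dvd_card, Nat.card_pos.ne'⟩, hcop.symm⟩,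
      mt (AddSubgroup.eq_bot_iff_card _).mpr K.2.1⟩
  · rintro ⟨⟨⟨hd, -⟩, hcop⟩, hd1⟩
    obtain ⟨K, rfl⟩ := IsAddCyclic.exists_addSubgroup_card_eq hd
    have htop : K ≠ ⊤ := by
      rintro rfl
      refine hH (hcop.symm.eq_one_of_dvd ?_)
      rw [AddSubgroup.card_top]
      exact H.1.card_addSubgroup_dvd_card
    exact ⟨⟨K, mt (AddSubgroup.eq_bot_iff_card _).mp hd1, htop⟩, hcop.symm, rfl⟩

theorem coprimeGraph_zmod_degree (n : ℕ) (hn : 1 < n) (H : AddSubgroup (ZMod n))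
    (hbot : H ≠ ⊥) (htop : H ≠ ⊤) :
    ((coprimeGraphAdd (ZMod n)).neighborSet ⟨H, hbot, htop⟩).ncard =
      (n.divisors.filter fun m => Nat.gcd m (Nat.card H) = 1).card - 1 := by
  have : NeZero n := ⟨by omega⟩
  have hinj : Function.Injective fun K : {K : AddSubgroup (ZMod n) // K ≠ ⊥ ∧ K ≠ ⊤} =>
      Nat.card K.1 :=
    IsAddCyclic.card_addSubgroup_injective.comp Subtype.val_injective
  rw [← Set.ncard_image_of_injective _ hinj,
    IsAddCyclic.image_card_neighborSet_coprimeGraphAdd, Set.ncard_coe_finset,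
    Finset.card_erase_of_mem (by simp [NeZero.ne n]), Nat.card_zmod]
end

section
/- For every finite simple graph Γ (on a finite vertex type), there exists a natural number m such that Γ is isomorphic to an induced subgraph of 𝒫(ℤ/mℤ); that is, there is a graph embedding (an injective map preserving both adjacency and non-adjacency) of Γ into the coprime graph of subgroups of the cyclic group ℤ/mℤ. -/
open SimpleGraph

open Function

/-!
Give every vertex and every non-edge of `Γ` its own prime, and label a vertex `v` by the product
of its own prime and the primes of the non-edges at `v`. Two distinct labels share a prime exactly
when the vertices span a non-edge, so they are coprime iff the vertices are adjacent, and distinct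
vertices get distinct labels. Every label `d` divides `m = 2 * ∏ labels` and satisfies `1 < d < m`,
so the subgroup of `ZMod m` of order `d` is a vertex of the coprime graph.
-/

theorem exists_injective_prime (α : Type*) [Countable α] :
    ∃ p : α → ℕ, Injective p ∧ ∀ i, (p i).Prime := by
  obtain ⟨e, he⟩ := Countable.exists_injective_nat α
  exact ⟨Nat.nth Nat.Prime ∘ e, (Nat.nth_injective Nat.infinite_setOfPred_prime).comp he,
    fun i => Nat.prime_nth_prime (e i)⟩

section PrimeProducts

variable {α : Type*} {p : α → ℕ}

theorem prime_dvd_prod_primes_iff (hinj : Injective p) (hp : ∀ i, (p i).Prime)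
    {s : Finset α} {i : α} : p i ∣ ∏ j ∈ s, p j ↔ i ∈ s := by
  refine ⟨fun h => ?_, fun h => Finset.dvd_prod_of_mem p h⟩
  obtain ⟨j, hj, hij⟩ := ((hp i).prime.dvd_finsetProd_iff p).mp h
  rwa [hinj ((Nat.prime_dvd_prime_iff_eq (hp i) (hp j)).mp hij)]

theorem prod_primes_injective (hinj : Injective p) (hp : ∀ i, (p i).Prime) :
    Injective fun s : Finset α => ∏ i ∈ s, p i := fun s t hst => by
  ext i
  rw [← prime_dvd_prod_primes_iff hinj hp, ← prime_dvd_prod_primes_iff hinj hp (s := t)]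
  exact iff_of_eq (congrArg _ hst)

theorem coprime_prod_primes_iff_disjoint (hinj : Injective p) (hp : ∀ i, (p i).Prime)
    {s t : Finset α} : Nat.Coprime (∏ i ∈ s, p i) (∏ i ∈ t, p i) ↔ Disjoint s t := by
  simp_rw [Nat.coprime_prod_left_iff, Nat.coprime_prod_right_iff,
    Nat.coprime_primes (hp _) (hp _), hinj.ne_iff, Finset.disjoint_iff_ne]

end PrimeProducts

namespace SimpleGraph

variable {V : Type*} [Fintype V] (Γ : SimpleGraph V)

open Classical in
noncomputable def nonEdgeLabels (v : V) : Finset (V ⊕ Sym2 V) :=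
  Finset.univ.filter (Sum.elim (· = v) (· ∈ Γᶜ.incidenceSet v))

variable {Γ}

@[simp]
theorem inl_mem_nonEdgeLabels {u v : V} : .inl u ∈ Γ.nonEdgeLabels v ↔ u = v := by
  simp [nonEdgeLabels]

@[simp]
theorem inr_mem_nonEdgeLabels {e : Sym2 V} {v : V} :
    .inr e ∈ Γ.nonEdgeLabels v ↔ e ∈ Γᶜ.incidenceSet v := by
  simp [nonEdgeLabels]

theorem nonEdgeLabels_injective : Injective Γ.nonEdgeLabels := fun u v h => by
  simpa using (Finset.ext_iff.mp h (.inl u))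

theorem disjoint_nonEdgeLabels_iff {u v : V} (huv : u ≠ v) :
    Disjoint (Γ.nonEdgeLabels u) (Γ.nonEdgeLabels v) ↔ Γ.Adj u v := by
  rw [← not_iff_not]
  simp only [Finset.not_disjoint_iff, Sum.exists, inl_mem_nonEdgeLabels, inr_mem_nonEdgeLabels]
  constructor
  · rintro (⟨w, rfl, rfl⟩ | ⟨e, hu, hv⟩)
    · exact absurd rfl huv
    · exact fun h => (Γᶜ.incidenceSet_inter_incidenceSet_of_not_adj (fun hc => hc.2 h) huv).subset
        ⟨hu, hv⟩
  · intro h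
    exact Or.inr ⟨s(u, v), ⟨⟨huv, h⟩, Sym2.mem_mk_left u v⟩, ⟨huv, h⟩, Sym2.mem_mk_right u v⟩

end SimpleGraph

theorem SimpleGraph.exists_coprime_labelling {V : Type*} [Fintype V] (Γ : SimpleGraph V) :
    ∃ n : V → ℕ, Injective n ∧ (∀ v, 1 < n v) ∧
      ∀ u v, u ≠ v → (Nat.Coprime (n u) (n v) ↔ Γ.Adj u v) := by
  obtain ⟨p, hinj, hp⟩ := exists_injective_prime (V ⊕ Sym2 V)
  refine ⟨fun v => ∏ i ∈ Γ.nonEdgeLabels v, p i,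
    (prod_primes_injective hinj hp).comp nonEdgeLabels_injective, fun v => ?_, fun u v huv => ?_⟩
  · have hdvd : p (.inl v) ∣ ∏ i ∈ Γ.nonEdgeLabels v, p i :=
      (prime_dvd_prod_primes_iff hinj hp).mpr (inl_mem_nonEdgeLabels.mpr rfl)
    exact (hp _).one_lt.trans_le
      (Nat.le_of_dvd (Finset.prod_pos fun i _ => (hp i).pos) hdvd)
  · rw [coprime_prod_primes_iff_disjoint hinj hp, disjoint_nonEdgeLabels_iff huv]

theorem ZMod.exists_addSubgroup_card {m d : ℕ} [NeZero m] (hd : d ∣ m) (hd₁ : d ≠ 1)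
    (hdm : d ≠ m) : ∃ H : AddSubgroup (ZMod m), H ≠ ⊥ ∧ H ≠ ⊤ ∧ Nat.card H = d := by
  have hcard : Nat.card (AddSubgroup.zmultiples ((m / d : ℕ) : ZMod m)) = d := by
    rw [Nat.card_zmultiples, ZMod.addOrderOf_coe _ (NeZero.ne m),
      Nat.gcd_eq_right (Nat.div_dvd_of_dvd hd), Nat.div_div_self hd (NeZero.ne m)]
  refine ⟨_, ?_, ?_, hcard⟩
  · rwa [Ne, AddSubgroup.eq_bot_iff_card, hcard]
  · rwa [Ne, ← AddSubgroup.card_eq_iff_eq_top, hcard, Nat.card_zmod]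

theorem nonempty_embedding_coprimeGraphAdd {G V : Type*} [AddGroup G] {Γ : SimpleGraph V}
    {n : V → ℕ} (hn : Injective n) (hcop : ∀ u v, u ≠ v → (Nat.Coprime (n u) (n v) ↔ Γ.Adj u v))
    (hG : ∀ v, ∃ H : AddSubgroup G, H ≠ ⊥ ∧ H ≠ ⊤ ∧ Nat.card H = n v) :
    Nonempty (Γ ↪g coprimeGraphAdd G) := by
  choose H hbot htop hcard using hG
  let f : V → {H : AddSubgroup G // H ≠ ⊥ ∧ H ≠ ⊤} := fun v => ⟨H v, hbot v, htop v⟩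
  have hf : Injective f := fun u v huv => hn <| by
    rw [← hcard u, ← hcard v, show H u = H v from congrArg Subtype.val huv]
  refine ⟨⟨⟨f, hf⟩, fun {u v} => ?_⟩⟩
  by_cases huv : u = v
  · subst huv
    simp [coprimeGraphAdd]
  · simp [coprimeGraphAdd, f, hf.ne huv, hcard, hcop u v huv]

theorem exists_embedding_coprimeGraph_zmod {V : Type*} [Fintype V]
    (Γ : SimpleGraph V) :
    ∃ m : ℕ, Nonempty (Γ ↪g coprimeGraphAdd (ZMod m)) := by
  obtain ⟨n, hn, hn₁, hcop⟩ := Γ.exists_coprime_labelling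
  have hN : 0 < ∏ v, n v := Finset.prod_pos fun v _ => zero_lt_one.trans (hn₁ v)
  have : NeZero (2 * ∏ v, n v) := ⟨by positivity⟩
  refine ⟨2 * ∏ v, n v, nonempty_embedding_coprimeGraphAdd hn hcop fun v => ?_⟩
  have hdvd : n v ∣ ∏ v, n v := Finset.dvd_prod_of_mem n (Finset.mem_univ v)
  exact ZMod.exists_addSubgroup_card (hdvd.mul_left 2) (hn₁ v).ne'
    (by have := Nat.le_of_dvd hN hdvd; omega)
end

section
/- If G is a finite group whose order has at least five distinct prime divisors, then the coprime graph 𝒫(G) contains the complete graph K₅: there exist five distinct vertices of 𝒫(G) that are pairwise adjacent (a clique of size 5). -/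
open SimpleGraph

theorem exists_subgroup_card_eq_of_mem_primeFactors {G : Type*} [Group G] [Finite G] {p : ℕ}
    (hp : p ∈ (Nat.card G).primeFactors) : ∃ H : Subgroup G, Nat.card H = p := by
  have : Fact p.Prime := ⟨Nat.prime_of_mem_primeFactors hp⟩
  simpa using Sylow.exists_subgroup_card_pow_prime (n := 1) p
    (by simpa using Nat.dvd_of_mem_primeFactors hp)

theorem Subgroup.ne_bot_and_ne_top_of_card_eq_prime {G : Type*} [Group G] {H : Subgroup G}
    {p : ℕ} (hp : p.Prime) (hH : Nat.card H = p) (hG : ¬(Nat.card G).Prime) :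
    H ≠ ⊥ ∧ H ≠ ⊤ := by
  refine ⟨fun hbot => hp.ne_one ?_, fun htop => hG ?_⟩
  · rw [← hH, hbot, Subgroup.card_bot]
  · rwa [← Subgroup.card_top (G := G), ← htop, hH]

theorem Nat.not_prime_of_two_le_card_primeFactors {n : ℕ} (hn : 2 ≤ n.primeFactors.card) :
    ¬n.Prime := fun hp => by
  rw [hp.primeFactors, Finset.card_singleton] at hn
  omega

namespace coprimeGraph

variable {G : Type*} [Group G] [Finite G]

noncomputable def primeOrderVertex (hG : 2 ≤ (Nat.card G).primeFactors.card)
    (p : (Nat.card G).primeFactors) : {H : Subgroup G // H ≠ ⊥ ∧ H ≠ ⊤} :=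
  let H := (exists_subgroup_card_eq_of_mem_primeFactors p.2).choose
  ⟨H, Subgroup.ne_bot_and_ne_top_of_card_eq_prime (Nat.prime_of_mem_primeFactors p.2)
    (exists_subgroup_card_eq_of_mem_primeFactors p.2).choose_spec
    (Nat.not_prime_of_two_le_card_primeFactors hG)⟩

theorem card_primeOrderVertex (hG : 2 ≤ (Nat.card G).primeFactors.card)
    (p : (Nat.card G).primeFactors) : Nat.card (primeOrderVertex hG p).1 = p :=
  (exists_subgroup_card_eq_of_mem_primeFactors p.2).choose_spec

theorem primeOrderVertex_injective (hG : 2 ≤ (Nat.card G).primeFactors.card) :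
    Function.Injective (primeOrderVertex hG) := fun p q hpq => Subtype.ext <| by
  rw [← card_primeOrderVertex hG p, ← card_primeOrderVertex hG q, hpq]

noncomputable def primeOrderEmbedding (hG : 2 ≤ (Nat.card G).primeFactors.card) :
    completeGraph (Nat.card G).primeFactors ↪g coprimeGraph G where
  toFun := primeOrderVertex hG
  inj' := primeOrderVertex_injective hG
  map_rel_iff' {p q} := by
    refine ⟨fun hadj hpq => hadj.1 (congrArg _ hpq), fun hpq => ⟨?_, ?_⟩⟩
    · exact (primeOrderVertex_injective hG).ne hpq
    · change (Nat.card (primeOrderVertex hG p).1).Coprime (Nat.card (primeOrderVertex hG q).1)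
      rw [card_primeOrderVertex, card_primeOrderVertex, Nat.coprime_primes
        (Nat.prime_of_mem_primeFactors p.2) (Nat.prime_of_mem_primeFactors q.2)]
      exact Subtype.coe_injective.ne hpq

theorem not_cliqueFree_of_le_card_primeFactors {n : ℕ}
    (hG : 2 ≤ (Nat.card G).primeFactors.card) (hn : n ≤ (Nat.card G).primeFactors.card) :
    ¬(coprimeGraph G).CliqueFree n := by
  rw [not_cliqueFree_iff_top_isContained]
  let primes : Fin n ↪ (Nat.card G).primeFactors :=
    (Fin.castLEEmb hn).trans (Nat.card G).primeFactors.equivFin.symm.toEmbedding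
  exact (Embedding.completeGraph primes).isContained.trans (primeOrderEmbedding hG).isContained

end coprimeGraph

theorem coprimeGraph_contains_K5 {G : Type*} [Group G] [Finite G]
    (h : 5 ≤ (Nat.card G).primeFactors.card) :
    ∃ s : Finset {H : Subgroup G // H ≠ ⊥ ∧ H ≠ ⊤}, (coprimeGraph G).IsNClique 5 s := by
  simpa [CliqueFree] using coprimeGraph.not_cliqueFree_of_le_card_primeFactors (by omega) h
end

section
/- If G is a finite group whose order has exactly four distinct prime divisors, then the coprime graph 𝒫(G) contains a copy of the complete bipartite graph K_{2,3} and a copy of the star K_{1,4} (i.e. there exist injective graph homomorphisms from K_{2,3} and from K_{1,4} into 𝒫(G)). -/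
open SimpleGraph

/-! By Cauchy's theorem the four prime divisors of `|G|` give subgroups `P₀, …, P₃` of pairwise
distinct prime orders, a `K₄` in `𝒫(G)`. A fifth vertex `X` adjacent to `P₀` and `P₁` is any
nontrivial subgroup of order dividing `|P₂| |P₃|` other than `P₂` and `P₃`: a conjugate of `P₂`
if `P₂` is not normal, and `P₃ P₂` if it is. Then `{P₀, P₁}` and `{P₂, P₃, X}` span a `K_{2,3}`,
and `P₀` together with `P₁, P₂, P₃, X` spans a `K_{1,4}`. -/

namespace SimpleGraph

theorem exists_injective_hom_completeBipartiteGraph {V α β : Type*} {Γ : SimpleGraph V}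
    {f : α → V} {g : β → V} (hf : f.Injective) (hg : g.Injective)
    (hfg : ∀ a b, Γ.Adj (f a) (g b)) :
    ∃ φ : completeBipartiteGraph α β →g Γ, Function.Injective φ :=
  ⟨⟨Sum.elim f g, by rintro (a | a) (b | b) h <;> simp_all [(hfg _ _).symm]⟩,
    hf.sumElim hg fun a b => (hfg a b).ne⟩

theorem exists_injective_hom_K23_and_K14 {V : Type*} {Γ : SimpleGraph V} {a b c d x : V}
    (hab : Γ.Adj a b) (hac : Γ.Adj a c) (had : Γ.Adj a d) (hax : Γ.Adj a x)
    (hbc : Γ.Adj b c) (hbd : Γ.Adj b d) (hbx : Γ.Adj b x)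
    (hcd : c ≠ d) (hcx : c ≠ x) (hdx : d ≠ x) :
    (∃ φ : completeBipartiteGraph (Fin 2) (Fin 3) →g Γ, Function.Injective φ) ∧
      (∃ φ : completeBipartiteGraph (Fin 1) (Fin 4) →g Γ, Function.Injective φ) := by
  have hcdx : Function.Injective ![c, d, x] :=
    Fin.cons_injective_iff.mpr ⟨by simp [hcd, hcx], by simp [hdx]⟩
  have hbcdx : Function.Injective ![b, c, d, x] := Fin.cons_injective_iff.mpr
    ⟨by simp [hbc.ne, hbd.ne, hbx.ne], hcdx⟩
  exact ⟨exists_injective_hom_completeBipartiteGraph (f := ![a, b]) (g := ![c, d, x])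
      (by simp [hab.ne]) hcdx (by simp [Fin.forall_fin_succ, hac, had, hax, hbc, hbd, hbx]),
    exists_injective_hom_completeBipartiteGraph (f := ![a]) (g := ![b, c, d, x])
      (Function.injective_of_subsingleton _) hbcdx
      (by simp [Fin.forall_fin_succ, hab, hac, had, hax])⟩

end SimpleGraph

namespace Subgroup

variable {G : Type*} [Group G]

theorem eq_bot_of_le_of_coprime_card {H K : Subgroup G} (hle : H ≤ K)
    (hco : (Nat.card H).Coprime (Nat.card K)) : H = ⊥ :=
  card_eq_one.mp (hco.eq_one_of_dvd (card_dvd_of_le hle))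

theorem ne_top_of_coprime_card [Finite G] {H K : Subgroup G} (hK : K ≠ ⊥)
    (hco : (Nat.card H).Coprime (Nat.card K)) : H ≠ ⊤ := by
  rintro rfl
  exact hK (eq_bot_of_le_of_coprime_card le_top hco.symm)

open scoped Pointwise in
theorem card_sup_of_normal_of_coprime [Finite G] {H N : Subgroup G} [N.Normal]
    (hco : (Nat.card H).Coprime (Nat.card N)) :
    Nat.card ↥(H ⊔ N) = Nat.card H * Nat.card N := by
  refine le_antisymm ?_ (Nat.le_of_dvd Nat.card_pos
    (hco.mul_dvd_of_dvd_of_dvd (card_dvd_of_le le_sup_left) (card_dvd_of_le le_sup_right)))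
  calc Nat.card ↥(H ⊔ N) = Nat.card ((H : Set G) * (N : Set G)) := by rw [← mul_normal]; rfl
    _ ≤ Nat.card H * Nat.card N := Set.natCard_mul_le

open scoped Pointwise in
theorem exists_ne_of_coprime_card [Finite G] {P Q : Subgroup G} (hP : P ≠ ⊥) (hQ : Q ≠ ⊥)
    (hPQ : (Nat.card P).Coprime (Nat.card Q)) :
    ∃ X : Subgroup G, X ≠ ⊥ ∧ X ≠ P ∧ X ≠ Q ∧ Nat.card X ∣ Nat.card P * Nat.card Q := by
  by_cases hn : P.Normal
  · refine ⟨Q ⊔ P, ne_bot_of_le_ne_bot hQ le_sup_left, fun e => ?_, fun e => ?_, ?_⟩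
    · exact hQ (eq_bot_of_le_of_coprime_card (e ▸ le_sup_left) hPQ.symm)
    · exact hP (eq_bot_of_le_of_coprime_card (e ▸ le_sup_right) hPQ)
    · rw [card_sup_of_normal_of_coprime hPQ.symm, mul_comm]
  · obtain ⟨g, hg⟩ : ∃ g : G, MulAut.conj g • P ≠ P := by
      by_contra! h
      exact hn (.of_conjugate_fixed h)
    have hcard : Nat.card ↥(MulAut.conj g • P) = Nat.card P :=
      (Nat.card_congr (equivSMul _ P).toEquiv).symm
    refine ⟨_, fun e => hP ?_, hg, fun e => hP ?_, hcard ▸ dvd_mul_right _ _⟩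
    · rwa [← card_eq_one, ← hcard, card_eq_one]
    · rw [← card_eq_one, ← Nat.coprime_self]
      rwa [← e, hcard] at hPQ

theorem exists_pairwise_coprime_card [Finite G] {n : ℕ}
    (h : n ≤ (Nat.card G).primeFactors.card) :
    ∃ P : Fin n → Subgroup G, (∀ i, P i ≠ ⊥) ∧
      Pairwise fun i j => (Nat.card (P i)).Coprime (Nat.card (P j)) := by
  obtain ⟨s, hs, rfl⟩ := Finset.exists_subset_card_eq h
  set p := s.orderEmbOfFin rfl
  have hp i : (p i).Prime ∧ p i ∣ Nat.card G :=
    (Nat.mem_primeFactors.mp (hs (s.orderEmbOfFin_mem rfl i))).imp_right And.left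
  choose P hP using fun i => have := Fact.mk (hp i).1
    Sylow.exists_subgroup_card_pow_prime (p i) (n := 1) (by simpa using (hp i).2)
  simp only [pow_one] at hP
  refine ⟨P, fun i => ?_, fun i j hij => ?_⟩
  · rw [Ne, ← card_eq_one, hP]
    exact (hp i).1.ne_one
  · dsimp only
    rw [hP, hP]
    exact (Nat.coprime_primes (hp i).1 (hp j).1).mpr (p.injective.ne hij)

end Subgroup

theorem coprimeGraph.adj_of_coprime {G : Type*} [Group G]
    {H K : {H : Subgroup G // H ≠ ⊥ ∧ H ≠ ⊤}} (hco : (Nat.card H.1).Coprime (Nat.card K.1)) :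
    (coprimeGraph G).Adj H K :=
  ⟨by rintro rfl; exact H.2.1 (Subgroup.eq_bot_of_le_of_coprime_card le_rfl hco), hco⟩

theorem coprimeGraph_contains_K23_K14 {G : Type*} [Group G] [Finite G]
    (h : (Nat.card G).primeFactors.card = 4) :
    (∃ f : completeBipartiteGraph (Fin 2) (Fin 3) →g coprimeGraph G,
        Function.Injective f) ∧
      (∃ f : completeBipartiteGraph (Fin 1) (Fin 4) →g coprimeGraph G,
        Function.Injective f) := by
  obtain ⟨P, hP, hco⟩ := Subgroup.exists_pairwise_coprime_card h.ge
  obtain ⟨X, hX, hX2, hX3, hXdvd⟩ :=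
    Subgroup.exists_ne_of_coprime_card (hP 2) (hP 3) (hco (by decide))
  have hXco {i} (h2 : i ≠ 2) (h3 : i ≠ 3) : (Nat.card (P i)).Coprime (Nat.card X) :=
    Nat.Coprime.coprime_dvd_right hXdvd ((hco h2).mul_right (hco h3))
  let v i : {H : Subgroup G // H ≠ ⊥ ∧ H ≠ ⊤} :=
    ⟨P i, hP i, let ⟨j, hj⟩ := exists_ne i; Subgroup.ne_top_of_coprime_card (hP j) (hco hj.symm)⟩
  let x : {H : Subgroup G // H ≠ ⊥ ∧ H ≠ ⊤} :=
    ⟨X, hX, Subgroup.ne_top_of_coprime_card (hP 0) (hXco (i := 0) (by decide) (by decide)).symm⟩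
  have hv {i j} (hij : i ≠ j) : (coprimeGraph G).Adj (v i) (v j) :=
    coprimeGraph.adj_of_coprime (hco hij)
  have hvx {i} (h2 : i ≠ 2) (h3 : i ≠ 3) : (coprimeGraph G).Adj (v i) x :=
    coprimeGraph.adj_of_coprime (hXco h2 h3)
  exact exists_injective_hom_K23_and_K14 (a := v 0) (b := v 1) (c := v 2) (d := v 3) (x := x)
    (hv (by decide)) (hv (by decide)) (hv (by decide)) (hvx (by decide) (by decide))
    (hv (by decide)) (hv (by decide)) (hvx (by decide) (by decide)) (hv (by decide)).ne
    (Subtype.coe_ne_coe.mp hX2.symm) (Subtype.coe_ne_coe.mp hX3.symm)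
end
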